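/- Under the stated hypotheses, let u : W → ℝ be smooth and positively homogeneous of degree 0 in y (u(x,ty) = u(x,y) for t > 0). Then at every point of W where F = 1 and for each index i: (X(∇^·u))^i = (∇^·(Xu))^i − (∇^:u)^i − ⟨Y(y), ∇^·u⟩·y^i, where Y(y)^i := Y^i_j y^j and for a semibasic vector field V, (XV)^i := y^k V^i_{:k}. -/

import Mathlib

noncomputable section

/-- A point of the local chart `W ⊆ ℝⁿ × (ℝⁿ ∖ {0})` of `TM ∖ {0}`. -/
abbrev Pt (n : ℕ) := (Fin n → ℝ) × (Fin n → ℝ)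

/-- Partial derivative in the `k`-th base (`x`) direction. -/
def pdx {n : ℕ} (k : Fin n) (f : Pt n → ℝ) (z : Pt n) : ℝ :=
  fderiv ℝ f z (Pi.single k 1, 0)

/-- Partial derivative in the `k`-th fibre (`y`) direction. -/
def pdy {n : ℕ} (k : Fin n) (f : Pt n → ℝ) (z : Pt n) : ℝ :=
  fderiv ℝ f z (0, Pi.single k 1)

/-- The fundamental tensor `g_{ij} = ½ ∂²(F²)/∂y^i∂y^j`. -/
def gF {n : ℕ} (F : Pt n → ℝ) (i j : Fin n) : Pt n → ℝ :=
  fun z => (1 / 2 : ℝ) * pdy i (pdy j (fun w => F w ^ 2)) z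

/-- The Cartan tensor `C_{ijk} = ¼ ∂³(F²)/∂y^i∂y^j∂y^k`. -/
def CF {n : ℕ} (F : Pt n → ℝ) (i j k : Fin n) : Pt n → ℝ :=
  fun z => (1 / 4 : ℝ) * pdy i (pdy j (pdy k (fun w => F w ^ 2))) z

/-- `y_k := g_{kj} y^j`. -/
def ylow {n : ℕ} (F : Pt n → ℝ) (k : Fin n) : Pt n → ℝ :=
  fun z => ∑ j, gF F k j z * z.2 j

/-- `N^i_j := Γ^i_{jk} y^k`. -/
def Nc {n : ℕ} (Γ : Fin n → Fin n → Fin n → Pt n → ℝ) (i j : Fin n) : Pt n → ℝ :=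
  fun z => ∑ k, Γ i j k z * z.2 k

/-- Horizontal derivative of a scalar: `u_{|k} := ∂u/∂x^k − N^p_k ∂u/∂y^p`. -/
def dhS {n : ℕ} (Γ : Fin n → Fin n → Fin n → Pt n → ℝ) (k : Fin n) (u : Pt n → ℝ) :
    Pt n → ℝ :=
  fun z => pdx k u z - ∑ p, Nc Γ p k z * pdy p u z

/-- The Chern curvature contraction `P^i_{lk} := −y^j ∂Γ^i_{jl}/∂y^k`. -/
def Pc {n : ℕ} (Γ : Fin n → Fin n → Fin n → Pt n → ℝ) (i l k : Fin n) : Pt n → ℝ :=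
  fun z => -∑ j, z.2 j * pdy k (Γ i j l) z

/-- The Riemann curvature tensor `R^i_{jkl}` of the connection. -/
def Rfull {n : ℕ} (Γ : Fin n → Fin n → Fin n → Pt n → ℝ) (i j k l : Fin n) :
    Pt n → ℝ :=
  fun z => pdx k (Γ i j l) z - pdx l (Γ i j k) z
    + (∑ m, pdy m (Γ i j k) z * Nc Γ m l z)
    - (∑ m, pdy m (Γ i j l) z * Nc Γ m k z)
    + (∑ m, Γ m j l z * Γ i m k z) - ∑ m, Γ m j k z * Γ i m l z

/-- `R^i_{kl} := y^j R^i_{jkl}`. -/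
def Rc {n : ℕ} (Γ : Fin n → Fin n → Fin n → Pt n → ℝ) (i k l : Fin n) : Pt n → ℝ :=
  fun z => ∑ j, z.2 j * Rfull Γ i j k l z

/-- The Lorentz force `Y^i_j := Ω_{jk} g^{ik}` (with `Ω` a function of `x` only). -/
def Yl {n : ℕ} (Ω : Fin n → Fin n → (Fin n → ℝ) → ℝ)
    (ginv : Fin n → Fin n → Pt n → ℝ) (i j : Fin n) : Pt n → ℝ :=
  fun z => ∑ k, Ω j k z.1 * ginv i k z

/-- Magnetic derivative of a scalar: `u_{:k} := u_{|k} + F Y^j_k u_{·j}`. -/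
def dmS {n : ℕ} (F : Pt n → ℝ) (Γ : Fin n → Fin n → Fin n → Pt n → ℝ)
    (Ω : Fin n → Fin n → (Fin n → ℝ) → ℝ) (ginv : Fin n → Fin n → Pt n → ℝ)
    (k : Fin n) (u : Pt n → ℝ) : Pt n → ℝ :=
  fun z => dhS Γ k u z + F z * ∑ j, Yl Ω ginv j k z * pdy j u z

/-- Horizontal covariant derivative of the Lorentz force:
`Y^i_{j|k} := ∂Y^i_j/∂x^k − N^p_k ∂Y^i_j/∂y^p + Γ^i_{kp} Y^p_j − Γ^p_{kj} Y^i_p`. -/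
def Ydh {n : ℕ} (Γ : Fin n → Fin n → Fin n → Pt n → ℝ)
    (Ω : Fin n → Fin n → (Fin n → ℝ) → ℝ) (ginv : Fin n → Fin n → Pt n → ℝ)
    (i j k : Fin n) : Pt n → ℝ :=
  fun z => pdx k (Yl Ω ginv i j) z - (∑ p, Nc Γ p k z * pdy p (Yl Ω ginv i j) z)
    + (∑ p, Γ i k p z * Yl Ω ginv p j z) - ∑ p, Γ p k j z * Yl Ω ginv i p z

/-- The twisted curvature `R̃^i_{lk}` of the magnetic flow. -/
def Rt {n : ℕ} (F : Pt n → ℝ) (Γ : Fin n → Fin n → Fin n → Pt n → ℝ)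
    (Ω : Fin n → Fin n → (Fin n → ℝ) → ℝ) (ginv : Fin n → Fin n → Pt n → ℝ)
    (i l k : Fin n) : Pt n → ℝ :=
  fun z => Rc Γ i l k z
    + (Ydh Γ Ω ginv i l k z - Ydh Γ Ω ginv i k l z)
    - ((∑ m, Pc Γ i l m z * Yl Ω ginv m k z) - ∑ m, Pc Γ i k m z * Yl Ω ginv m l z)
    + ((∑ j, Yl Ω ginv j l z * pdy j (Yl Ω ginv i k) z)
        - ∑ j, Yl Ω ginv j k z * pdy j (Yl Ω ginv i l) z)
    + ∑ s, ylow F s z * (Yl Ω ginv s k z * Yl Ω ginv i l z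
        - Yl Ω ginv s l z * Yl Ω ginv i k z)

/-- `∇^·u := (g^{ij} u_{·j})`. -/
def nablaV {n : ℕ} (ginv : Fin n → Fin n → Pt n → ℝ) (u : Pt n → ℝ) (i : Fin n) :
    Pt n → ℝ :=
  fun z => ∑ j, ginv i j z * pdy j u z

/-- `∇^:u := (g^{ij} u_{:j})`. -/
def nablaM {n : ℕ} (F : Pt n → ℝ) (Γ : Fin n → Fin n → Fin n → Pt n → ℝ)
    (Ω : Fin n → Fin n → (Fin n → ℝ) → ℝ) (ginv : Fin n → Fin n → Pt n → ℝ)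
    (u : Pt n → ℝ) (i : Fin n) : Pt n → ℝ :=
  fun z => ∑ j, ginv i j z * dmS F Γ Ω ginv j u z

/-- The generator applied to a scalar: `Xu := y^k u_{:k}`. -/
def Xs {n : ℕ} (F : Pt n → ℝ) (Γ : Fin n → Fin n → Fin n → Pt n → ℝ)
    (Ω : Fin n → Fin n → (Fin n → ℝ) → ℝ) (ginv : Fin n → Fin n → Pt n → ℝ)
    (u : Pt n → ℝ) : Pt n → ℝ :=
  fun z => ∑ k, z.2 k * dmS F Γ Ω ginv k u z

/-- `⟨U,V⟩ := g_{ij} U^i V^j`. -/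
def iprod {n : ℕ} (F : Pt n → ℝ) (U V : Fin n → Pt n → ℝ) : Pt n → ℝ :=
  fun z => ∑ i, ∑ j, gF F i j z * U i z * V j z

/-- Magnetic derivative of a semibasic vector field:
`U^i_{:k} := U^i_{|k} + F Y^j_k U^i_{·j}`. -/
def dmVec {n : ℕ} (F : Pt n → ℝ) (Γ : Fin n → Fin n → Fin n → Pt n → ℝ)
    (Ω : Fin n → Fin n → (Fin n → ℝ) → ℝ) (ginv : Fin n → Fin n → Pt n → ℝ)
    (k : Fin n) (U : Fin n → Pt n → ℝ) (i : Fin n) : Pt n → ℝ :=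
  fun z => pdx k (U i) z - (∑ p, Nc Γ p k z * pdy p (U i) z)
    + (∑ p, Γ i k p z * U p z)
    + F z * ∑ j, Yl Ω ginv j k z * pdy j (U i) z

/-- The generator applied to a semibasic vector field: `(XV)^i := y^k V^i_{:k}`. -/
def XVec {n : ℕ} (F : Pt n → ℝ) (Γ : Fin n → Fin n → Fin n → Pt n → ℝ)
    (Ω : Fin n → Fin n → (Fin n → ℝ) → ℝ) (ginv : Fin n → Fin n → Pt n → ℝ)
    (V : Fin n → Pt n → ℝ) (i : Fin n) : Pt n → ℝ :=
  fun z => ∑ k, z.2 k * dmVec F Γ Ω ginv k V i z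

/-- The Lorentz force applied to `y`: `Y(y)^i := Y^i_j y^j`. -/
def Yy {n : ℕ} (Ω : Fin n → Fin n → (Fin n → ℝ) → ℝ)
    (ginv : Fin n → Fin n → Pt n → ℝ) (i : Fin n) : Pt n → ℝ :=
  fun z => ∑ j, Yl Ω ginv i j z * z.2 j


namespace S12
open Filter Finset

variable {n : ℕ} {W : Set (Pt n)} {f g : Pt n → ℝ} {z v w : Pt n}

/-- Directional derivative. -/
def pd (v : Pt n) (f : Pt n → ℝ) (z : Pt n) : ℝ := fderiv ℝ f z v

lemma pdx_eq (k : Fin n) : pdx k f z = pd (Pi.single k 1, 0) f z := rfl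
lemma pdy_eq (k : Fin n) : pdy k f z = pd (0, Pi.single k 1) f z := rfl

/-- Smoothness on `W`. -/
def Sm (W : Set (Pt n)) (f : Pt n → ℝ) : Prop := ContDiffOn ℝ (⊤ : ℕ∞) f W

lemma Sm.diffAt (hf : Sm W f) (hW : IsOpen W) (hz : z ∈ W) : DifferentiableAt ℝ f z := by
  have := (hf.differentiableOn (by simp)).differentiableAt (hW.mem_nhds hz)
  exact this

lemma Sm.fderivSm (hf : Sm W f) (hW : IsOpen W) (v : Pt n) : Sm W (pd v f) := by
  have h1 : ContDiffOn ℝ (⊤ : ℕ∞) (fderiv ℝ f) W :=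
    hf.fderiv_of_isOpen hW (by exact_mod_cast le_top)
  exact h1.clm_apply contDiffOn_const

lemma Sm.const (c : ℝ) : Sm W (fun _ => c) := contDiffOn_const
lemma Sm.add (hf : Sm W f) (hg : Sm W g) : Sm W (fun z => f z + g z) := ContDiffOn.add hf hg
lemma Sm.mul (hf : Sm W f) (hg : Sm W g) : Sm W (fun z => f z * g z) := ContDiffOn.mul hf hg
lemma Sm.neg (hf : Sm W f) : Sm W (fun z => -f z) := ContDiffOn.neg hf
lemma Sm.sub (hf : Sm W f) (hg : Sm W g) : Sm W (fun z => f z - g z) := ContDiffOn.sub hf hg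
lemma Sm.pow (hf : Sm W f) (m : ℕ) : Sm W (fun z => f z ^ m) := ContDiffOn.pow hf m

lemma Sm.sum {ι : Type*} (s : Finset ι) (A : ι → Pt n → ℝ) (h : ∀ i ∈ s, Sm W (A i)) :
    Sm W (fun z => ∑ i ∈ s, A i z) := by
  classical
  induction s using Finset.induction with
  | empty => simpa using (Sm.const (W := W) 0)
  | @insert a s ha ih =>
    have h1 := h a (mem_insert_self a s)
    have h2 := ih (fun i hi => h i (mem_insert_of_mem hi))
    simpa [Finset.sum_insert ha] using Sm.add h1 h2

lemma Sm.prod {ι : Type*} (s : Finset ι) (A : ι → Pt n → ℝ) (h : ∀ i ∈ s, Sm W (A i)) :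
    Sm W (fun z => ∏ i ∈ s, A i z) := by
  classical
  induction s using Finset.induction with
  | empty => simpa using (Sm.const (W := W) 1)
  | @insert a s ha ih =>
    have h1 := h a (mem_insert_self a s)
    have h2 := ih (fun i hi => h i (mem_insert_of_mem hi))
    simpa [Finset.prod_insert ha] using Sm.mul h1 h2

lemma Sm.coordY (k : Fin n) : Sm (W) (fun z : Pt n => z.2 k) := by
  have : ContDiff ℝ (⊤ : ℕ∞) (fun z : Pt n => z.2 k) :=
    ((ContinuousLinearMap.proj k).comp (ContinuousLinearMap.snd ℝ (Fin n → ℝ) (Fin n → ℝ))).contDiff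
  exact this.contDiffOn

lemma Sm.inv (hf : Sm W f) (h0 : ∀ z ∈ W, f z ≠ 0) : Sm W (fun z => (f z)⁻¹) := ContDiffOn.inv hf h0

/-- pointwise rules -/
lemma pd_add (hf : DifferentiableAt ℝ f z) (hg : DifferentiableAt ℝ g z) :
    pd v (fun z => f z + g z) z = pd v f z + pd v g z := by
  unfold pd; rw [fderiv_fun_add hf hg]; rfl

lemma pd_mul (hf : DifferentiableAt ℝ f z) (hg : DifferentiableAt ℝ g z) :
    pd v (fun z => f z * g z) z = pd v f z * g z + f z * pd v g z := by
  unfold pd; rw [fderiv_fun_mul hf hg]; simp; ring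

lemma pd_const (c : ℝ) : pd v (fun _ => c) z = 0 := by
  unfold pd; rw [fderiv_fun_const]; rfl

lemma pd_sum {ι : Type*} (s : Finset ι) (A : ι → Pt n → ℝ)
    (h : ∀ i ∈ s, DifferentiableAt ℝ (A i) z) :
    pd v (fun z => ∑ i ∈ s, A i z) z = ∑ i ∈ s, pd v (A i) z := by
  unfold pd; rw [fderiv_fun_sum h]; simp

lemma pd_neg : pd v (fun z => -f z) z = - pd v f z := by
  unfold pd; rw [fderiv_fun_neg]; rfl

lemma pd_sub (hf : DifferentiableAt ℝ f z) (hg : DifferentiableAt ℝ g z) :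
    pd v (fun z => f z - g z) z = pd v f z - pd v g z := by
  unfold pd; rw [fderiv_fun_sub hf hg]; rfl

lemma pd_coordY (k : Fin n) : pd v (fun z : Pt n => z.2 k) z = v.2 k := by
  unfold pd
  have h : (fun z : Pt n => z.2 k) = fun z : Pt n =>
      ((ContinuousLinearMap.proj k).comp (ContinuousLinearMap.snd ℝ (Fin n → ℝ) (Fin n → ℝ))) z := rfl
  rw [h, ContinuousLinearMap.fderiv]
  rfl

lemma pd_congr (hW : IsOpen W) (hz : z ∈ W) (h : ∀ w ∈ W, f w = g w) :
    pd v f z = pd v g z := by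
  unfold pd
  rw [Filter.EventuallyEq.fderiv_eq (Filter.eventuallyEq_of_mem (hW.mem_nhds hz) h)]

/-- decomposition of a fibre direction -/
lemma pd_dir_sum (f : Pt n → ℝ) (z : Pt n) (y : Fin n → ℝ) :
    fderiv ℝ f z (0, y) = ∑ k, y k * pdy k f z := by
  have hy : ((0, y) : Pt n) = ∑ k, (y k) • ((0, Pi.single k 1) : Pt n) := by
    refine Prod.ext ?_ ?_
    · rw [Prod.fst_sum]; simp
    · simp only [Prod.snd_sum, Prod.smul_snd]
      rw [show (∑ k, y k • (Pi.single k 1 : Fin n → ℝ)) = ∑ k, Pi.single k (y k) by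
        refine Finset.sum_congr rfl fun k _ => ?_
        ext j; by_cases h : j = k <;> simp [Pi.single_apply, h]]
      exact (Finset.univ_sum_single y).symm ▸ rfl
  rw [hy, map_sum]
  refine Finset.sum_congr rfl fun k _ => ?_
  rw [map_smul]; rfl

/-- Clairaut -/
lemma pd_comm (hf : Sm W f) (hW : IsOpen W) (hz : z ∈ W) (v w : Pt n) :
    pd v (pd w f) z = pd w (pd v f) z := by
  have hev : ∀ᶠ ζ in nhds z, HasFDerivAt f (fderiv ℝ f ζ) ζ := by
    filter_upwards [hW.mem_nhds hz] with ζ hζ using (hf.diffAt hW hζ).hasFDerivAt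
  have hd2 : DifferentiableAt ℝ (fderiv ℝ f) z := by
    have h1 : ContDiffOn ℝ (⊤ : ℕ∞) (fderiv ℝ f) W := hf.fderiv_of_isOpen hW (by exact_mod_cast le_top)
    exact (h1.differentiableOn (by simp)).differentiableAt (hW.mem_nhds hz)
  have hsymm := second_derivative_symmetric_of_eventually hev hd2.hasFDerivAt w v
  have key : ∀ a : Pt n, pd v (pd a f) z = (fderiv ℝ (fderiv ℝ f) z v) a := by
    intro a
    unfold pd
    have : (fun ζ => fderiv ℝ f ζ a) = fun ζ => (fderiv ℝ f ζ) ((fun _ => a) ζ) := rfl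
    rw [this, fderiv_clm_apply hd2 (differentiableAt_const a)]
    simp
  rw [key w]
  have key2 : pd w (pd v f) z = (fderiv ℝ (fderiv ℝ f) z w) v := by
    unfold pd
    have : (fun ζ => fderiv ℝ f ζ v) = fun ζ => (fderiv ℝ f ζ) ((fun _ => v) ζ) := rfl
    rw [this, fderiv_clm_apply hd2 (differentiableAt_const v)]
    simp
  rw [key2]
  exact hsymm.symm

end S12

namespace S12
open Filter Finset

variable {n : ℕ} {W : Set (Pt n)} {f : Pt n → ℝ} {z : Pt n}

/-- The scaling map `(x, y) ↦ (x, t•y)` as a continuous linear map. -/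
def sc (n : ℕ) (t : ℝ) : Pt n →L[ℝ] Pt n :=
  (ContinuousLinearMap.fst ℝ (Fin n → ℝ) (Fin n → ℝ)).prod
    (t • ContinuousLinearMap.snd ℝ (Fin n → ℝ) (Fin n → ℝ))

lemma sc_apply (t : ℝ) (w : Pt n) : sc n t w = (w.1, t • w.2) := rfl

/-- Euler's identity for positively homogeneous functions of degree `d`. -/
lemma euler_general (hW : IsOpen W) (hf : Sm W f) (d : ℕ)
    (hhom : ∀ z ∈ W, ∀ t : ℝ, 0 < t → f (z.1, t • z.2) = t ^ d * f z)
    (hz : z ∈ W) : ∑ k, z.2 k * pdy k f z = (d : ℝ) * f z := by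
  have hline : HasDerivAt (fun t : ℝ => ((z.1, t • z.2) : Pt n)) ((0, z.2) : Pt n) 1 := by
    refine (hasDerivAt_const (1:ℝ) z.1).prodMk ?_
    simpa using (hasDerivAt_id (1:ℝ)).smul_const z.2
  have hd' : HasFDerivAt f (fderiv ℝ f z) ((fun t : ℝ => ((z.1, t • z.2) : Pt n)) 1) := by
    simpa using (hf.diffAt hW hz).hasFDerivAt
  have hcomp : HasDerivAt (fun t : ℝ => f (z.1, t • z.2)) (fderiv ℝ f z (0, z.2)) 1 := by
    simpa [Function.comp_def] using hd'.comp_hasDerivAt 1 hline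
  have heq : (fun t : ℝ => t ^ d * f z) =ᶠ[nhds 1] (fun t : ℝ => f (z.1, t • z.2)) := by
    filter_upwards [isOpen_Ioi.mem_nhds (show (0:ℝ) < 1 by norm_num)] with t ht
    exact (hhom z hz t ht).symm
  have h2 : HasDerivAt (fun t : ℝ => t ^ d * f z) ((d : ℝ) * f z) 1 := by
    simpa using (hasDerivAt_pow d (1:ℝ)).mul_const (f z)
  have h3 := (h2.congr_of_eventuallyEq heq.symm).unique hcomp
  rw [pd_dir_sum] at h3
  exact h3.symm

/-- The fibre derivative of a homogeneous function is homogeneous of one degree less. -/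
lemma pdy_homog (hW : IsOpen W) (hcone : ∀ z ∈ W, ∀ t : ℝ, 0 < t → (z.1, t • z.2) ∈ W)
    (hf : Sm W f) (d : ℕ)
    (hhom : ∀ z ∈ W, ∀ t : ℝ, 0 < t → f (z.1, t • z.2) = t ^ d * f z)
    (k : Fin n) (hz : z ∈ W) (t : ℝ) (ht : 0 < t) :
    t * pdy k f (z.1, t • z.2) = t ^ d * pdy k f z := by
  have hdiff : DifferentiableAt ℝ f (sc n t z) := hf.diffAt hW (hcone z hz t ht)
  have hcomp : fderiv ℝ (fun w => f (sc n t w)) z = (fderiv ℝ f (sc n t z)).comp (sc n t) :=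
    (hdiff.hasFDerivAt.comp z (sc n t).hasFDerivAt).fderiv
  have heq : fderiv ℝ (fun w => f (sc n t w)) z = fderiv ℝ (fun w => t ^ d * f w) z :=
    Filter.EventuallyEq.fderiv_eq (Filter.eventuallyEq_of_mem (hW.mem_nhds hz)
      fun w hw => by simpa [sc_apply] using hhom w hw t ht)
  have hrhs : fderiv ℝ (fun w => t ^ d * f w) z = t ^ d • fderiv ℝ f z :=
    fderiv_const_mul (hf.diffAt hW hz) _
  have := congrArg (fun L : Pt n →L[ℝ] ℝ => L ((0, Pi.single k 1) : Pt n))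
    (hcomp.symm.trans (heq.trans hrhs))
  simp only [ContinuousLinearMap.comp_apply, ContinuousLinearMap.smul_apply] at this
  have hscv : sc n t ((0, Pi.single k 1) : Pt n) = t • ((0, Pi.single k 1) : Pt n) := by
    refine Prod.ext ?_ ?_ <;> simp [sc_apply]
  rw [hscv, map_smul] at this
  simpa [pdy, smul_eq_mul, sc_apply] using this

/-- Functions of the base variable only have vanishing fibre derivatives. -/
lemma pdy_base_zero (φ : (Fin n → ℝ) → ℝ) (k : Fin n)
    (hd : DifferentiableAt ℝ (fun w : Pt n => φ w.1) z) :
    pdy k (fun w : Pt n => φ w.1) z = 0 := by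
  have hline : HasDerivAt (fun t : ℝ => ((z.1, z.2 + t • (Pi.single k 1 : Fin n → ℝ)) : Pt n))
      ((0, Pi.single k 1) : Pt n) 0 := by
    refine (hasDerivAt_const (0:ℝ) z.1).prodMk ?_
    simpa using ((hasDerivAt_id (0:ℝ)).smul_const (Pi.single k 1 : Fin n → ℝ)).const_add z.2
  have hd' : HasFDerivAt (fun w : Pt n => φ w.1) (fderiv ℝ (fun w : Pt n => φ w.1) z)
      ((fun t : ℝ => ((z.1, z.2 + t • (Pi.single k 1 : Fin n → ℝ)) : Pt n)) 0) := by
    simpa using hd.hasFDerivAt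
  have h1 : HasDerivAt (fun _ : ℝ => φ z.1)
      (fderiv ℝ (fun w : Pt n => φ w.1) z ((0, Pi.single k 1) : Pt n)) 0 := by
    simpa [Function.comp_def] using hd'.comp_hasDerivAt 0 hline
  have h2 := (hasDerivAt_const (0:ℝ) (φ z.1)).unique h1
  exact h2.symm

end S12

namespace S12
open Filter Finset

variable {n : ℕ} {W : Set (Pt n)} {z : Pt n}

lemma sum_delta₁ (f : Fin n → ℝ) (i : Fin n) :
    ∑ k, (if i = k then (1:ℝ) else 0) * f k = f i := by
  simp [ite_mul]

lemma sum_delta₂ (f : Fin n → ℝ) (i : Fin n) :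
    ∑ k, f k * (if i = k then (1:ℝ) else 0) = f i := by
  simp [mul_ite]

lemma sum_delta₁' (f : Fin n → ℝ) (i : Fin n) :
    ∑ k, (if k = i then (1:ℝ) else 0) * f k = f i := by
  simp [ite_mul]

lemma sum_delta₂' (f : Fin n → ℝ) (i : Fin n) :
    ∑ k, f k * (if k = i then (1:ℝ) else 0) = f i := by
  simp [mul_ite]

/-- Determinant of a matrix of smooth functions is smooth. -/
lemma sm_det (M : Fin n → Fin n → Pt n → ℝ) (h : ∀ a b, Sm W (M a b)) :
    Sm W (fun z => Matrix.det (Matrix.of fun a b => M a b z)) := by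
  have hrw : (fun z => Matrix.det (Matrix.of fun a b => M a b z))
      = fun z => ∑ σ : Equiv.Perm (Fin n),
          ((Equiv.Perm.sign σ : ℤ) : ℝ) * ∏ a, M (σ a) a z := by
    funext z
    rw [Matrix.det_apply]
    refine Finset.sum_congr rfl fun σ _ => ?_
    rw [Units.smul_def, zsmul_eq_mul]
    rfl
  rw [hrw]
  exact Sm.sum _ _ fun σ _ => Sm.mul (Sm.const _) (Sm.prod _ _ fun a _ => h _ _)

section ginv

variable {F : Pt n → ℝ} {ginv : Fin n → Fin n → Pt n → ℝ}

/-- `ginv` agrees on `W` with the explicit inverse of the matrix `gF`. -/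
lemma ginv_eq
    (hg1 : ∀ z ∈ W, ∀ i j, ∑ k, gF F i k z * ginv k j z = if i = j then (1:ℝ) else 0) :
    ∀ z ∈ W, ∀ i j, ginv i j z =
      (Matrix.det (Matrix.of fun a b => gF F a b z))⁻¹ *
        Matrix.adjugate (Matrix.of fun a b => gF F a b z) i j := by
  intro z hz i j
  set A : Matrix (Fin n) (Fin n) ℝ := Matrix.of fun a b => gF F a b z with hA
  set B : Matrix (Fin n) (Fin n) ℝ := Matrix.of fun a b => ginv a b z with hB
  have hAB : A * B = 1 := by
    ext a b
    rw [Matrix.mul_apply, Matrix.one_apply]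
    simpa [hA, hB] using hg1 z hz a b
  have hinv : A⁻¹ = B := Matrix.inv_eq_right_inv hAB
  have : B i j = A⁻¹ i j := by rw [hinv]
  rw [Matrix.inv_def] at this
  have : B i j = Ring.inverse A.det * A.adjugate i j := by
    simpa [Matrix.smul_apply, smul_eq_mul] using this
  rw [Ring.inverse_eq_inv'] at this
  exact this

/-- The matrix `gF` has nonvanishing determinant on `W`. -/
lemma det_ne
    (hg1 : ∀ z ∈ W, ∀ i j, ∑ k, gF F i k z * ginv k j z = if i = j then (1:ℝ) else 0) :
    ∀ z ∈ W, Matrix.det (Matrix.of fun a b => gF F a b z) ≠ 0 := by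
  intro z hz
  set A : Matrix (Fin n) (Fin n) ℝ := Matrix.of fun a b => gF F a b z with hA
  set B : Matrix (Fin n) (Fin n) ℝ := Matrix.of fun a b => ginv a b z with hB
  have hAB : A * B = 1 := by
    ext a b
    rw [Matrix.mul_apply, Matrix.one_apply]
    simpa [hA, hB] using hg1 z hz a b
  have := congrArg Matrix.det hAB
  rw [Matrix.det_mul, Matrix.det_one] at this
  exact left_ne_zero_of_mul_eq_one this

/-- `ginv` is smooth on `W`. -/
lemma sm_ginv (hW : IsOpen W) (hgf : ∀ a b, Sm W (gF F a b))
    (hg1 : ∀ z ∈ W, ∀ i j, ∑ k, gF F i k z * ginv k j z = if i = j then (1:ℝ) else 0) :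
    ∀ i j, Sm W (ginv i j) := by
  intro i j
  have hdet : Sm W (fun z => Matrix.det (Matrix.of fun a b => gF F a b z)) := sm_det _ hgf
  have hadj : Sm W (fun z => Matrix.adjugate (Matrix.of fun a b => gF F a b z) i j) := by
    have hrw : (fun z => Matrix.adjugate (Matrix.of fun a b => gF F a b z) i j)
        = fun z => Matrix.det (Matrix.of fun a b =>
            (fun a b => if a = j then (Pi.single i 1 : Fin n → ℝ) b else gF F a b z) a b) := by
      funext z
      rw [Matrix.adjugate_apply]
      congr 1
      ext a b
      rw [Matrix.updateRow_apply]
      rfl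
    rw [hrw]
    refine sm_det _ fun a b => ?_
    by_cases h : a = j <;> simp only [h, if_true, if_false, if_neg] <;> first
      | exact Sm.const _ | exact hgf a b
  have := Sm.mul (Sm.inv hdet (det_ne hg1)) hadj
  exact ContDiffOn.congr this (fun z hz => ginv_eq hg1 z hz i j)

/-- Derivative of the inverse metric. -/
lemma pd_ginv (hW : IsOpen W) (hgf : ∀ a b, Sm W (gF F a b))
    (hgi : ∀ a b, Sm W (ginv a b))
    (hg1 : ∀ z ∈ W, ∀ i j, ∑ k, gF F i k z * ginv k j z = if i = j then (1:ℝ) else 0)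
    (hg2 : ∀ z ∈ W, ∀ i j, ∑ k, ginv i k z * gF F k j z = if i = j then (1:ℝ) else 0)
    (hz : z ∈ W) (v : Pt n) (i j : Fin n) :
    pd v (ginv i j) z = -∑ b, ∑ a, ginv i a z * pd v (gF F a b) z * ginv b j z := by
  have key : ∀ l, ∑ k, (pd v (ginv i k) z * gF F k l z + ginv i k z * pd v (gF F k l) z) = 0 := by
    intro l
    have h0 : pd v (fun ζ => ∑ k, ginv i k ζ * gF F k l ζ) z
        = pd v (fun _ => if i = l then (1:ℝ) else 0) z :=
      pd_congr hW hz (fun w hw => hg2 w hw i l)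
    rw [pd_const] at h0
    rw [pd_sum _ _ (fun k _ => ((hgi i k).diffAt hW hz).fun_mul ((hgf k l).diffAt hW hz))] at h0
    rw [Finset.sum_congr rfl (fun k _ =>
      pd_mul ((hgi i k).diffAt hW hz) ((hgf k l).diffAt hW hz))] at h0
    exact h0
  have h1 : ∀ l, ∑ k, pd v (ginv i k) z * gF F k l z
      = -∑ k, ginv i k z * pd v (gF F k l) z := by
    intro l
    have := key l
    rw [Finset.sum_add_distrib] at this
    linarith
  calc pd v (ginv i j) z
      = ∑ k, pd v (ginv i k) z * (if k = j then (1:ℝ) else 0) := (sum_delta₂' (fun k => pd v (ginv i k) z) j).symm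
    _ = ∑ k, pd v (ginv i k) z * (∑ l, gF F k l z * ginv l j z) := by
        refine Finset.sum_congr rfl fun k _ => ?_
        rw [hg1 z hz k j]
    _ = ∑ k, ∑ l, pd v (ginv i k) z * gF F k l z * ginv l j z := by
        refine Finset.sum_congr rfl fun k _ => ?_
        rw [Finset.mul_sum]
        refine Finset.sum_congr rfl fun l _ => by ring
    _ = ∑ l, (∑ k, pd v (ginv i k) z * gF F k l z) * ginv l j z := by
        rw [Finset.sum_comm]
        refine Finset.sum_congr rfl fun l _ => ?_
        rw [Finset.sum_mul]
    _ = ∑ l, (-∑ k, ginv i k z * pd v (gF F k l) z) * ginv l j z := by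
        refine Finset.sum_congr rfl fun l _ => ?_
        rw [h1 l]
    _ = -∑ l, ∑ k, ginv i k z * pd v (gF F k l) z * ginv l j z := by
        rw [← Finset.sum_neg_distrib]
        refine Finset.sum_congr rfl fun l _ => ?_
        rw [neg_mul, Finset.sum_mul]
end ginv

end S12

namespace S12
open Finset

variable {n : ℕ} {W : Set (Pt n)} {f g : Pt n → ℝ} {z v : Pt n}

lemma pd_cmul (c : ℝ) (hf : DifferentiableAt ℝ f z) :
    pd v (fun z => c * f z) z = c * pd v f z := by
  unfold pd; rw [fderiv_const_mul hf]; rfl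

lemma single_apply (k m : Fin n) : (Pi.single k (1:ℝ) : Fin n → ℝ) m = if m = k then (1:ℝ) else 0 := by
  simp [Pi.single_apply]

/-! wrappers phrased with `pdx`/`pdy` -/

lemma pdy_add (k : Fin n) (hf : DifferentiableAt ℝ f z) (hg : DifferentiableAt ℝ g z) :
    pdy k (fun z => f z + g z) z = pdy k f z + pdy k g z := pd_add hf hg

lemma pdy_sub (k : Fin n) (hf : DifferentiableAt ℝ f z) (hg : DifferentiableAt ℝ g z) :
    pdy k (fun z => f z - g z) z = pdy k f z - pdy k g z := pd_sub hf hg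

lemma pdy_mul (k : Fin n) (hf : DifferentiableAt ℝ f z) (hg : DifferentiableAt ℝ g z) :
    pdy k (fun z => f z * g z) z = pdy k f z * g z + f z * pdy k g z := pd_mul hf hg

lemma pdy_cmul (k : Fin n) (c : ℝ) (hf : DifferentiableAt ℝ f z) :
    pdy k (fun z => c * f z) z = c * pdy k f z := pd_cmul c hf

lemma pdy_const (k : Fin n) (c : ℝ) : pdy k (fun _ : Pt n => c) z = 0 := pd_const c

lemma pdy_sum {ι : Type*} (k : Fin n) (s : Finset ι) (A : ι → Pt n → ℝ)
    (h : ∀ i ∈ s, DifferentiableAt ℝ (A i) z) :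
    pdy k (fun z => ∑ i ∈ s, A i z) z = ∑ i ∈ s, pdy k (A i) z := pd_sum s A h

lemma pdx_add (k : Fin n) (hf : DifferentiableAt ℝ f z) (hg : DifferentiableAt ℝ g z) :
    pdx k (fun z => f z + g z) z = pdx k f z + pdx k g z := pd_add hf hg

lemma pdx_sub (k : Fin n) (hf : DifferentiableAt ℝ f z) (hg : DifferentiableAt ℝ g z) :
    pdx k (fun z => f z - g z) z = pdx k f z - pdx k g z := pd_sub hf hg

lemma pdx_mul (k : Fin n) (hf : DifferentiableAt ℝ f z) (hg : DifferentiableAt ℝ g z) :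
    pdx k (fun z => f z * g z) z = pdx k f z * g z + f z * pdx k g z := pd_mul hf hg

lemma pdx_sum {ι : Type*} (k : Fin n) (s : Finset ι) (A : ι → Pt n → ℝ)
    (h : ∀ i ∈ s, DifferentiableAt ℝ (A i) z) :
    pdx k (fun z => ∑ i ∈ s, A i z) z = ∑ i ∈ s, pdx k (A i) z := pd_sum s A h

lemma pdy_coord (k m : Fin n) : pdy k (fun z : Pt n => z.2 m) z = if m = k then (1:ℝ) else 0 := by
  have := pd_coordY (n := n) (v := ((0, Pi.single k 1) : Pt n)) (z := z) m
  rw [show pdy k (fun z : Pt n => z.2 m) z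
    = pd ((0, Pi.single k 1) : Pt n) (fun z : Pt n => z.2 m) z from rfl, this]
  exact single_apply k m

lemma pdx_coord (k m : Fin n) : pdx k (fun z : Pt n => z.2 m) z = 0 := by
  have := pd_coordY (n := n) (v := ((Pi.single k 1, 0) : Pt n)) (z := z) m
  rw [show pdx k (fun z : Pt n => z.2 m) z
    = pd ((Pi.single k 1, 0) : Pt n) (fun z : Pt n => z.2 m) z from rfl, this]
  rfl

lemma pdy_comm (hf : Sm W f) (hW : IsOpen W) (hz : z ∈ W) (a b : Fin n) :
    pdy a (pdy b f) z = pdy b (pdy a f) z := pd_comm hf hW hz _ _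

lemma pdxy_comm (hf : Sm W f) (hW : IsOpen W) (hz : z ∈ W) (a b : Fin n) :
    pdy a (pdx b f) z = pdx b (pdy a f) z := pd_comm hf hW hz _ _

lemma pdy_congr (k : Fin n) (hW : IsOpen W) (hz : z ∈ W) (h : ∀ w ∈ W, f w = g w) :
    pdy k f z = pdy k g z := pd_congr hW hz h

lemma pdx_congr (k : Fin n) (hW : IsOpen W) (hz : z ∈ W) (h : ∀ w ∈ W, f w = g w) :
    pdx k f z = pdx k g z := pd_congr hW hz h

end S12
namespace S12
open Finset

variable {n : ℕ}

lemma sum_split4 {ι : Type*} (s : Finset ι) (t1 t2 t3 t4 : ι → ℝ) :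
    ∑ j ∈ s, (t1 j - t2 j + t3 j + t4 j)
      = (∑ j ∈ s, t1 j) - (∑ j ∈ s, t2 j) + (∑ j ∈ s, t3 j) + (∑ j ∈ s, t4 j) := by
  classical
  induction s using Finset.induction with
  | empty => simp
  | @insert a s ha ih => rw [Finset.sum_insert ha]; simp only [Finset.sum_insert ha, ih]; ring

lemma sum_split7 {ι : Type*} (s : Finset ι) (t1 t2 t3 t4 t5 t6 t7 : ι → ℝ) :
    ∑ j ∈ s, (t1 j + t2 j - t3 j - t4 j + t5 j - t6 j + t7 j)
      = (∑ j ∈ s, t1 j) + (∑ j ∈ s, t2 j) - (∑ j ∈ s, t3 j) - (∑ j ∈ s, t4 j)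
        + (∑ j ∈ s, t5 j) - (∑ j ∈ s, t6 j) + (∑ j ∈ s, t7 j) := by
  classical
  induction s using Finset.induction with
  | empty => simp
  | @insert a s ha ih => rw [Finset.sum_insert ha]; simp only [Finset.sum_insert ha, ih]; ring

lemma sum_split2 {ι : Type*} (s : Finset ι) (t1 t2 : ι → ℝ) :
    ∑ j ∈ s, (t1 j + t2 j) = (∑ j ∈ s, t1 j) + (∑ j ∈ s, t2 j) := Finset.sum_add_distrib

lemma sum_swap₀ (y : Fin n → ℝ) (P : Fin n → Fin n → ℝ) :
    ∑ k, y k * ∑ j, P j k = ∑ j, ∑ k, y k * P j k := by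
  calc ∑ k, y k * ∑ j, P j k = ∑ k, ∑ j, y k * P j k := by
        exact Finset.sum_congr rfl fun k _ => Finset.mul_sum _ _ _
    _ = ∑ j, ∑ k, y k * P j k := Finset.sum_comm

lemma sum_swap₁ (y c : Fin n → ℝ) (M : Fin n → Fin n → ℝ) :
    ∑ k, y k * ∑ p, M p k * c p = ∑ p, (∑ k, y k * M p k) * c p := by
  calc ∑ k, y k * ∑ p, M p k * c p = ∑ k, ∑ p, y k * M p k * c p := by
        refine Finset.sum_congr rfl fun k _ => ?_
        rw [Finset.mul_sum]
        exact Finset.sum_congr rfl fun p _ => by ring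
    _ = ∑ p, ∑ k, y k * M p k * c p := Finset.sum_comm
    _ = ∑ p, (∑ k, y k * M p k) * c p := by
        refine Finset.sum_congr rfl fun p _ => (Finset.sum_mul _ _ _).symm

end S12
namespace S12
open Finset
variable {n : ℕ}

lemma sum_split4' (y t1 t2 t3 t4 : Fin n → ℝ) :
    ∑ k, y k * (t1 k - t2 k + t3 k + t4 k)
      = (∑ k, y k * t1 k) - (∑ k, y k * t2 k) + (∑ k, y k * t3 k) + (∑ k, y k * t4 k) := by
  rw [← sum_split4]
  exact Finset.sum_congr rfl fun k _ => by ring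

lemma sum_split7' (c t1 t2 t3 t4 t5 t6 t7 : Fin n → ℝ) :
    ∑ j, c j * (t1 j + t2 j - t3 j - t4 j + t5 j - t6 j + t7 j)
      = (∑ j, c j * t1 j) + (∑ j, c j * t2 j) - (∑ j, c j * t3 j) - (∑ j, c j * t4 j)
        + (∑ j, c j * t5 j) - (∑ j, c j * t6 j) + (∑ j, c j * t7 j) := by
  rw [← sum_split7]
  exact Finset.sum_congr rfl fun j _ => by ring

end S12
namespace S12
open Finset
variable {n : ℕ}

lemma sum_split3 {ι : Type*} (s : Finset ι) (t1 t2 t3 : ι → ℝ) :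
    ∑ j ∈ s, (t1 j + t2 j + t3 j)
      = (∑ j ∈ s, t1 j) + (∑ j ∈ s, t2 j) + (∑ j ∈ s, t3 j) := by
  classical
  induction s using Finset.induction with
  | empty => simp
  | @insert a s ha ih => rw [Finset.sum_insert ha]; simp only [Finset.sum_insert ha, ih]; ring

lemma sum_split3neg {ι : Type*} (s : Finset ι) (t1 t2 t3 : ι → ℝ) :
    ∑ j ∈ s, (-t1 j - t2 j - t3 j)
      = -(∑ j ∈ s, t1 j) - (∑ j ∈ s, t2 j) - (∑ j ∈ s, t3 j) := by
  classical
  induction s using Finset.induction with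
  | empty => simp
  | @insert a s ha ih => rw [Finset.sum_insert ha]; simp only [Finset.sum_insert ha, ih]; ring

lemma sum_rot3 (t : Fin n → Fin n → Fin n → ℝ) :
    ∑ b, ∑ a, ∑ m, t b a m = ∑ m, ∑ b, ∑ a, t b a m := by
  calc ∑ b, ∑ a, ∑ m, t b a m = ∑ b, ∑ m, ∑ a, t b a m :=
        Finset.sum_congr rfl fun b _ => Finset.sum_comm
    _ = ∑ m, ∑ b, ∑ a, t b a m := Finset.sum_comm

lemma sum_swap₂ (y c e : Fin n → ℝ) (D : Fin n → Fin n → Fin n → ℝ) :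
    ∑ k, y k * (∑ b, ∑ a, c a * D k a b * e b)
      = ∑ b, ∑ a, c a * (∑ k, y k * D k a b) * e b := by
  calc ∑ k, y k * (∑ b, ∑ a, c a * D k a b * e b)
      = ∑ k, ∑ b, ∑ a, y k * (c a * D k a b * e b) := by
        refine Finset.sum_congr rfl fun k _ => ?_
        rw [Finset.mul_sum]
        exact Finset.sum_congr rfl fun b _ => Finset.mul_sum _ _ _
    _ = ∑ b, ∑ k, ∑ a, y k * (c a * D k a b * e b) := Finset.sum_comm
    _ = ∑ b, ∑ a, ∑ k, y k * (c a * D k a b * e b) :=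
        Finset.sum_congr rfl fun b _ => Finset.sum_comm
    _ = ∑ b, ∑ a, c a * (∑ k, y k * D k a b) * e b := by
        refine Finset.sum_congr rfl fun b _ => Finset.sum_congr rfl fun a _ => ?_
        rw [Finset.mul_sum, Finset.sum_mul]
        exact Finset.sum_congr rfl fun k _ => by ring

end S12
namespace S12
open Finset
variable {n : ℕ}

lemma mul_sum₂ (c d : ℝ) (s : Fin n → Fin n → ℝ) :
    c * ((∑ b, ∑ a, s b a) * d) = ∑ b, ∑ a, c * (s b a * d) := by
  rw [Finset.sum_mul, Finset.mul_sum]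
  refine Finset.sum_congr rfl fun b _ => ?_
  rw [Finset.sum_mul, Finset.mul_sum]

lemma sum_swap₅ (C c : Fin n → ℝ) (D : Fin n → Fin n → ℝ) (g : Fin n → Fin n → ℝ) :
    ∑ m, C m * (∑ b, ∑ a, c a * D a b * g b m)
      = ∑ b, ∑ a, c a * D a b * (∑ m, C m * g b m) := by
  calc ∑ m, C m * (∑ b, ∑ a, c a * D a b * g b m)
      = ∑ m, ∑ b, ∑ a, c a * D a b * (C m * g b m) := by
        refine Finset.sum_congr rfl fun m _ => ?_
        rw [Finset.mul_sum]
        refine Finset.sum_congr rfl fun b _ => ?_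
        rw [Finset.mul_sum]
        exact Finset.sum_congr rfl fun a _ => by ring
    _ = ∑ b, ∑ m, ∑ a, c a * D a b * (C m * g b m) := Finset.sum_comm
    _ = ∑ b, ∑ a, ∑ m, c a * D a b * (C m * g b m) :=
        Finset.sum_congr rfl fun b _ => Finset.sum_comm
    _ = ∑ b, ∑ a, c a * D a b * (∑ m, C m * g b m) :=
        Finset.sum_congr rfl fun b _ => Finset.sum_congr rfl fun a _ =>
          (Finset.mul_sum _ _ _).symm

end S12

open S12 Finset in
theorem stmt_12_aux (n : ℕ) (hn : 1 ≤ n) (W : Set (Pt n)) (hWopen : IsOpen W)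
    (hWy : ∀ z ∈ W, z.2 ≠ 0)
    (hWcone : ∀ z ∈ W, ∀ t : ℝ, 0 < t → (z.1, t • z.2) ∈ W)
    (F : Pt n → ℝ) (hFsmooth : ContDiffOn ℝ (⊤ : ℕ∞) F W)
    (hFpos : ∀ z ∈ W, 0 < F z)
    (hFhom : ∀ z ∈ W, ∀ t : ℝ, 0 < t → F (z.1, t • z.2) = t * F z)
    (ginv : Fin n → Fin n → Pt n → ℝ)
    (hginv : ∀ z ∈ W, ∀ i j, ∑ k, gF F i k z * ginv k j z = if i = j then (1:ℝ) else 0)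
    (hginv' : ∀ z ∈ W, ∀ i j, ∑ k, ginv i k z * gF F k j z = if i = j then (1:ℝ) else 0)
    (Γ : Fin n → Fin n → Fin n → Pt n → ℝ)
    (hΓsmooth : ∀ i j k, ContDiffOn ℝ (⊤ : ℕ∞) (Γ i j k) W)
    (hΓsym : ∀ i j k, ∀ z ∈ W, Γ i j k z = Γ i k j z)
    (hcompat : ∀ z ∈ W, ∀ j l m,
      pdx m (gF F j l) z =
        ∑ k, (gF F k l z * Γ k j m z + gF F k j z * Γ k l m z
          + 2 * CF F j k l z * Nc Γ k m z))
    (hspray : ∀ z ∈ W, ∀ i l, (∑ j, ∑ k, z.2 j * z.2 k * pdy l (Γ i j k) z) = 0)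
    (Ω : Fin n → Fin n → (Fin n → ℝ) → ℝ)
    (hΩsmooth : ∀ j k, ContDiffOn ℝ (⊤ : ℕ∞) (fun z : Pt n => Ω j k z.1) W)
    (hΩanti : ∀ z ∈ W, ∀ j k, Ω j k z.1 = -Ω k j z.1)
    (u : Pt n → ℝ) (hu : ContDiffOn ℝ (⊤ : ℕ∞) u W)
    (huhom : ∀ z ∈ W, ∀ t : ℝ, 0 < t → u (z.1, t • z.2) = u z) :
    ∀ z ∈ W, F z = 1 → ∀ i,
      XVec F Γ Ω ginv (nablaV ginv u) i z
        = nablaV ginv (Xs F Γ Ω ginv u) i z - nablaM F Γ Ω ginv u i z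
          - iprod F (Yy Ω ginv) (nablaV ginv u) z * z.2 i := by
  classical
  intro z hz hF1 i
  -- smoothness
  have hFS : Sm W F := hFsmooth
  have hQs : Sm W (fun w => F w ^ 2) := Sm.pow hFS 2
  have huS : Sm W u := hu
  have hQ1 : ∀ b, Sm W (pdy b (fun w => F w ^ 2)) := fun b => hQs.fderivSm hWopen _
  have hQ2 : ∀ a b, Sm W (pdy a (pdy b (fun w => F w ^ 2))) := fun a b => (hQ1 b).fderivSm hWopen _
  have hgfS : ∀ a b, Sm W (gF F a b) := by
    intro a b
    have := Sm.mul (Sm.const (W := W) (1/2 : ℝ)) (hQ2 a b)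
    exact this
  have hgiS : ∀ a b, Sm W (ginv a b) := sm_ginv hWopen hgfS hginv
  have hΓS : ∀ a b c, Sm W (Γ a b c) := hΓsmooth
  have hNS : ∀ p k, Sm W (Nc Γ p k) :=
    fun p k => Sm.sum _ _ fun m _ => Sm.mul (hΓS p k m) (Sm.coordY m)
  have hΩS : ∀ a b, Sm W (fun w : Pt n => Ω a b w.1) := hΩsmooth
  have hYlS : ∀ a b, Sm W (Yl Ω ginv a b) :=
    fun a b => Sm.sum _ _ fun m _ => Sm.mul (hΩS b m) (hgiS a m)
  have hpdyuS : ∀ j, Sm W (pdy j u) := fun j => huS.fderivSm hWopen _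
  have hpdxuS : ∀ k, Sm W (pdx k u) := fun k => huS.fderivSm hWopen _
  have hVS : ∀ p, Sm W (nablaV ginv u p) :=
    fun p => Sm.sum _ _ fun m _ => Sm.mul (hgiS p m) (hpdyuS m)
  have hdmSS : ∀ k, Sm W (dmS F Γ Ω ginv k u) := by
    intro k
    refine Sm.add (Sm.sub (hpdxuS k) (Sm.sum _ _ fun p _ => Sm.mul (hNS p k) (hpdyuS p)))
      (Sm.mul hFS (Sm.sum _ _ fun l _ => Sm.mul (hYlS l k) (hpdyuS l)))
  -- differentiability at z
  have dA : ∀ {f : Pt n → ℝ}, Sm W f → DifferentiableAt ℝ f z :=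
    fun hf => hf.diffAt hWopen hz
  -- metric identities at z
  have hgV : ∀ a b, ∑ k, gF F a k z * ginv k b z = if a = b then (1:ℝ) else 0 := hginv z hz
  have hgV' : ∀ a b, ∑ k, ginv a k z * gF F k b z = if a = b then (1:ℝ) else 0 := hginv' z hz
  have hgf_symm : ∀ w ∈ W, ∀ a b, gF F a b w = gF F b a w := by
    intro w hw a b
    show (1/2 : ℝ) * pdy a (pdy b (fun w => F w ^ 2)) w
      = (1/2 : ℝ) * pdy b (pdy a (fun w => F w ^ 2)) w
    rw [pdy_comm hQs hWopen hw a b]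
  have hT_outer : ∀ a b c, pdy a (pdy b (pdy c (fun w => F w ^ 2))) z
      = pdy b (pdy a (pdy c (fun w => F w ^ 2))) z :=
    fun a b c => pdy_comm (hQ1 c) hWopen hz a b
  have hT_inner : ∀ a b c, pdy a (pdy b (pdy c (fun w => F w ^ 2))) z
      = pdy a (pdy c (pdy b (fun w => F w ^ 2))) z :=
    fun a b c => pdy_congr a hWopen hz (fun w hw => pdy_comm hQs hWopen hw b c)
  have hDgY : ∀ p a b, pdy p (gF F a b) z
      = (1/2 : ℝ) * pdy p (pdy a (pdy b (fun w => F w ^ 2))) z := by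
    intro p a b
    show pdy p (fun ζ => (1/2 : ℝ) * pdy a (pdy b (fun w => F w ^ 2)) ζ) z = _
    rw [pdy_cmul p _ (dA (hQ2 a b))]
  have hCFval : ∀ a b c, CF F a b c z
      = (1/4 : ℝ) * pdy a (pdy b (pdy c (fun w => F w ^ 2))) z := fun a b c => rfl
  -- symmetry of ginv at z
  have haux : ∀ a l, ∑ k, ginv k a z * gF F k l z = if l = a then (1:ℝ) else 0 := by
    intro a l
    have h : ∑ k, ginv k a z * gF F k l z = ∑ k, gF F l k z * ginv k a z := by
      refine Finset.sum_congr rfl fun k _ => ?_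
      rw [hgf_symm z hz k l]; ring
    rw [h, hgV l a]
  have hgisym : ∀ a b, ginv a b z = ginv b a z := by
    intro a b
    have e1 : ∑ l, (∑ k, ginv k a z * gF F k l z) * ginv l b z = ginv a b z := by
      rw [Finset.sum_congr rfl fun l _ => by rw [haux a l]]
      exact sum_delta₁' _ a
    have e2 : ∑ l, (∑ k, ginv k a z * gF F k l z) * ginv l b z = ginv b a z := by
      calc ∑ l, (∑ k, ginv k a z * gF F k l z) * ginv l b z
          = ∑ l, ∑ k, ginv k a z * (gF F k l z * ginv l b z) := by
            refine Finset.sum_congr rfl fun l _ => ?_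
            rw [Finset.sum_mul]
            exact Finset.sum_congr rfl fun k _ => by ring
        _ = ∑ k, ∑ l, ginv k a z * (gF F k l z * ginv l b z) := Finset.sum_comm
        _ = ∑ k, ginv k a z * (∑ l, gF F k l z * ginv l b z) := by
            refine Finset.sum_congr rfl fun k _ => (Finset.mul_sum _ _ _).symm
        _ = ∑ k, ginv k a z * (if k = b then (1:ℝ) else 0) := by
            refine Finset.sum_congr rfl fun k _ => by rw [hgV k b]
        _ = ginv b a z := sum_delta₂' _ b
    rw [← e1, e2]
  -- derivative of ginv
  have hDGiY : ∀ p a b, pdy p (ginv a b) z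
      = -∑ bb, ∑ aa, ginv a aa z * pdy p (gF F aa bb) z * ginv bb b z :=
    fun p a b => pd_ginv hWopen hgfS hgiS hginv hginv' hz _ a b
  have hDGiX : ∀ k a b, pdx k (ginv a b) z
      = -∑ bb, ∑ aa, ginv a aa z * pdx k (gF F aa bb) z * ginv bb b z :=
    fun k a b => pd_ginv hWopen hgfS hgiS hginv hginv' hz _ a b
  -- homogeneity / Euler
  have hQhom : ∀ w ∈ W, ∀ t : ℝ, 0 < t →
      (fun w => F w ^ 2) ((w.1, t • w.2) : Pt n) = t ^ 2 * (fun w => F w ^ 2) w := by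
    intro w hw t ht
    simp only
    rw [hFhom w hw t ht]; ring
  have hQyhom : ∀ j, ∀ w ∈ W, ∀ t : ℝ, 0 < t →
      pdy j (fun w => F w ^ 2) ((w.1, t • w.2) : Pt n) = t ^ 1 * pdy j (fun w => F w ^ 2) w := by
    intro j w hw t ht
    have h := pdy_homog hWopen hWcone hQs 2 hQhom j hw t ht
    have ht' : t ≠ 0 := ne_of_gt ht
    have h2 : t * pdy j (fun w => F w ^ 2) ((w.1, t • w.2) : Pt n)
        = t * (t ^ 1 * pdy j (fun w => F w ^ 2) w) := by rw [h]; ring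
    exact mul_left_cancel₀ ht' h2
  have hlow : ∀ j, ∑ k, z.2 k * gF F k j z = F z * pdy j F z := by
    intro j
    have he := euler_general hWopen (hQ1 j) 1 (hQyhom j) hz
    have h1 : ∀ k, z.2 k * gF F k j z
        = (1/2 : ℝ) * (z.2 k * pdy k (pdy j (fun w => F w ^ 2)) z) := by
      intro k
      show z.2 k * ((1/2 : ℝ) * pdy k (pdy j (fun w => F w ^ 2)) z) = _
      ring
    rw [Finset.sum_congr rfl fun k _ => h1 k, ← Finset.mul_sum, he]
    have h2 : pdy j (fun w => F w ^ 2) z = 2 * F z * pdy j F z := by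
      have hsq : (fun w : Pt n => F w ^ 2) = fun w => F w * F w := by funext w; ring
      rw [hsq, pdy_mul j (dA hFS) (dA hFS)]; ring
    rw [h2]; ring
  have hgiF : ∀ a, ∑ j, ginv a j z * pdy j F z = z.2 a := by
    intro a
    have e1 : ∀ j, pdy j F z = ∑ k, z.2 k * gF F k j z := by
      intro j; rw [hlow j, hF1, one_mul]
    calc ∑ j, ginv a j z * pdy j F z
        = ∑ j, ∑ k, z.2 k * (ginv a j z * gF F j k z) := by
          refine Finset.sum_congr rfl fun j _ => ?_
          rw [e1 j, Finset.mul_sum]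
          refine Finset.sum_congr rfl fun k _ => ?_
          rw [hgf_symm z hz k j]; ring
      _ = ∑ k, ∑ j, z.2 k * (ginv a j z * gF F j k z) := Finset.sum_comm
      _ = ∑ k, z.2 k * (if a = k then (1:ℝ) else 0) := by
          refine Finset.sum_congr rfl fun k _ => ?_
          rw [← Finset.mul_sum, hgV' a k]
      _ = z.2 a := sum_delta₂ _ a
  -- Clairaut for u
  have huyy : ∀ a b, pdy a (pdy b u) z = pdy b (pdy a u) z :=
    fun a b => pdy_comm huS hWopen hz a b
  have huxy : ∀ a k, pdy a (pdx k u) z = pdx k (pdy a u) z :=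
    fun a k => pdxy_comm huS hWopen hz a k
  -- derivative of N and spray contraction
  have hNy : ∀ j p k, pdy j (Nc Γ p k) z
      = (∑ m, pdy j (Γ p k m) z * z.2 m) + Γ p k j z := by
    intro j p k
    show pdy j (fun ζ => ∑ m, Γ p k m ζ * ζ.2 m) z = _
    rw [pdy_sum j _ _ (fun m _ => (dA (hΓS p k m)).fun_mul (dA (Sm.coordY m)))]
    rw [Finset.sum_congr rfl (fun m _ => pdy_mul j (dA (hΓS p k m)) (dA (Sm.coordY m)))]
    calc ∑ m, (pdy j (Γ p k m) z * z.2 m + Γ p k m z * pdy j (fun z : Pt n => z.2 m) z)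
        = ∑ m, (pdy j (Γ p k m) z * z.2 m + Γ p k m z * (if m = j then (1:ℝ) else 0)) := by
          exact Finset.sum_congr rfl fun m _ => by rw [pdy_coord]
      _ = (∑ m, pdy j (Γ p k m) z * z.2 m) + ∑ m, Γ p k m z * (if m = j then (1:ℝ) else 0) :=
          Finset.sum_add_distrib
      _ = (∑ m, pdy j (Γ p k m) z * z.2 m) + Γ p k j z := by rw [sum_delta₂']
  have hNyc : ∀ j p, ∑ k, z.2 k * pdy j (Nc Γ p k) z = Nc Γ p j z := by
    intro j p
    calc ∑ k, z.2 k * pdy j (Nc Γ p k) z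
        = (∑ k, ∑ m, z.2 k * z.2 m * pdy j (Γ p k m) z) + ∑ k, z.2 k * Γ p k j z := by
          rw [← Finset.sum_add_distrib]
          refine Finset.sum_congr rfl fun k _ => ?_
          rw [hNy j p k, mul_add, Finset.mul_sum]
          congr 1
          exact Finset.sum_congr rfl fun m _ => by ring
      _ = 0 + ∑ k, z.2 k * Γ p k j z := by rw [hspray z hz p j]
      _ = Nc Γ p j z := by
          rw [zero_add]
          show _ = ∑ k, Γ p j k z * z.2 k
          exact Finset.sum_congr rfl fun k _ => by rw [hΓsym p k j z hz]; ring
  -- derivative of the Lorentz force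
  have hYly : ∀ j a b, pdy j (Yl Ω ginv a b) z = ∑ m, Ω b m z.1 * pdy j (ginv a m) z := by
    intro j a b
    show pdy j (fun ζ => ∑ m, Ω b m ζ.1 * ginv a m ζ) z = _
    rw [pdy_sum j _ _ (fun m _ => (dA (hΩS b m)).fun_mul (dA (hgiS a m)))]
    refine Finset.sum_congr rfl fun m _ => ?_
    rw [pdy_mul j (dA (hΩS b m)) (dA (hgiS a m)), pdy_base_zero (Ω b m) j (dA (hΩS b m))]
    ring
  -- expansions of derivatives of the vertical gradient
  have hVx : ∀ k p', pdx k (nablaV ginv u p') z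
      = ∑ j, (pdx k (ginv p' j) z * pdy j u z + ginv p' j z * pdx k (pdy j u) z) := by
    intro k p'
    show pdx k (fun ζ => ∑ j, ginv p' j ζ * pdy j u ζ) z = _
    rw [pdx_sum k _ _ (fun j _ => (dA (hgiS p' j)).fun_mul (dA (hpdyuS j)))]
    exact Finset.sum_congr rfl fun j _ => pdx_mul k (dA (hgiS p' j)) (dA (hpdyuS j))
  have hVy : ∀ p p', pdy p (nablaV ginv u p') z
      = ∑ j, (pdy p (ginv p' j) z * pdy j u z + ginv p' j z * pdy p (pdy j u) z) := by
    intro p p'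
    show pdy p (fun ζ => ∑ j, ginv p' j ζ * pdy j u ζ) z = _
    rw [pdy_sum p _ _ (fun j _ => (dA (hgiS p' j)).fun_mul (dA (hpdyuS j)))]
    exact Finset.sum_congr rfl fun j _ => pdy_mul p (dA (hgiS p' j)) (dA (hpdyuS j))
  -- LHS structural decomposition
  have hp2 : ∑ k, z.2 k * (∑ p, Nc Γ p k z * pdy p (nablaV ginv u i) z)
      = ∑ p, (∑ k, z.2 k * Nc Γ p k z) * pdy p (nablaV ginv u i) z := sum_swap₁ _ _ _
  have hp3 : ∑ k, z.2 k * (∑ p, Γ i k p z * nablaV ginv u p z)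
      = ∑ p, Nc Γ i p z * nablaV ginv u p z := by
    rw [sum_swap₁ (fun k => z.2 k) (fun p => nablaV ginv u p z) (fun p k => Γ i k p z)]
    refine Finset.sum_congr rfl fun p _ => ?_
    congr 1
    show _ = ∑ k, Γ i p k z * z.2 k
    exact Finset.sum_congr rfl fun k _ => by rw [hΓsym i k p z hz]; ring
  have hp4 : ∑ k, z.2 k * (F z * ∑ p, Yl Ω ginv p k z * pdy p (nablaV ginv u i) z)
      = F z * ∑ p, Yy Ω ginv p z * pdy p (nablaV ginv u i) z := by
    calc ∑ k, z.2 k * (F z * ∑ p, Yl Ω ginv p k z * pdy p (nablaV ginv u i) z)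
        = F z * ∑ k, z.2 k * ∑ p, Yl Ω ginv p k z * pdy p (nablaV ginv u i) z := by
          rw [Finset.mul_sum]
          exact Finset.sum_congr rfl fun k _ => by ring
      _ = F z * ∑ p, (∑ k, z.2 k * Yl Ω ginv p k z) * pdy p (nablaV ginv u i) z := by
          rw [sum_swap₁]
      _ = F z * ∑ p, Yy Ω ginv p z * pdy p (nablaV ginv u i) z := by
          congr 1
          refine Finset.sum_congr rfl fun p _ => ?_
          congr 1
          show _ = ∑ k, Yl Ω ginv p k z * z.2 k
          exact Finset.sum_congr rfl fun k _ => by ring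
  have hL0 : XVec F Γ Ω ginv (nablaV ginv u) i z
      = (∑ k, z.2 k * pdx k (nablaV ginv u i) z)
        - (∑ p, (∑ k, z.2 k * Nc Γ p k z) * pdy p (nablaV ginv u i) z)
        + (∑ p, Nc Γ i p z * nablaV ginv u p z)
        + F z * ∑ p, Yy Ω ginv p z * pdy p (nablaV ginv u i) z := by
    show ∑ k, z.2 k * (pdx k (nablaV ginv u i) z
        - (∑ p, Nc Γ p k z * pdy p (nablaV ginv u i) z)
        + (∑ p, Γ i k p z * nablaV ginv u p z)
        + F z * ∑ p, Yl Ω ginv p k z * pdy p (nablaV ginv u i) z) = _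
    rw [sum_split4', hp2, hp3, hp4]
  -- contraction of compatibility
  have hgfxc : ∀ a b, ∑ k, z.2 k * pdx k (gF F a b) z
      = ∑ m, (gF F m b z * Nc Γ m a z + gF F m a z * Nc Γ m b z
          + 2 * CF F a m b z * (∑ k, z.2 k * Nc Γ m k z)) := by
    intro a b
    calc ∑ k, z.2 k * pdx k (gF F a b) z
        = ∑ k, z.2 k * ∑ m, (gF F m b z * Γ m a k z + gF F m a z * Γ m b k z
            + 2 * CF F a m b z * Nc Γ m k z) := by
          exact Finset.sum_congr rfl fun k _ => by rw [hcompat z hz a b k]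
      _ = ∑ m, ∑ k, z.2 k * (gF F m b z * Γ m a k z + gF F m a z * Γ m b k z
            + 2 * CF F a m b z * Nc Γ m k z) := sum_swap₀ _ _
      _ = ∑ m, (gF F m b z * Nc Γ m a z + gF F m a z * Nc Γ m b z
            + 2 * CF F a m b z * (∑ k, z.2 k * Nc Γ m k z)) := by
          refine Finset.sum_congr rfl fun m _ => ?_
          have e1 : Nc Γ m a z = ∑ k, Γ m a k z * z.2 k := rfl
          have e2 : Nc Γ m b z = ∑ k, Γ m b k z * z.2 k := rfl
          rw [e1, e2, Finset.mul_sum, Finset.mul_sum, Finset.mul_sum,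
            ← Finset.sum_add_distrib, ← Finset.sum_add_distrib]
          exact Finset.sum_congr rfl fun k _ => by ring
  have hgfyC : ∀ p a b, pdy p (gF F a b) z = 2 * CF F a p b z := by
    intro p a b
    rw [hDgY p a b, hCFval a p b, hT_outer p a b]
    ring
  -- the three contractions of the x-derivative of ginv
  have ht1 : ∀ j', ∑ b, ∑ a, ginv i a z * (∑ m, gF F m b z * Nc Γ m a z) * ginv b j' z
      = ∑ a, ginv i a z * Nc Γ j' a z := by
    intro j'
    calc ∑ b, ∑ a, ginv i a z * (∑ m, gF F m b z * Nc Γ m a z) * ginv b j' z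
        = ∑ b, ∑ a, ∑ m, ginv i a z * Nc Γ m a z * (gF F m b z * ginv b j' z) := by
          refine Finset.sum_congr rfl fun b _ => Finset.sum_congr rfl fun a _ => ?_
          rw [Finset.mul_sum, Finset.sum_mul]
          exact Finset.sum_congr rfl fun m _ => by ring
      _ = ∑ a, ∑ b, ∑ m, ginv i a z * Nc Γ m a z * (gF F m b z * ginv b j' z) :=
          Finset.sum_comm
      _ = ∑ a, ∑ m, ∑ b, ginv i a z * Nc Γ m a z * (gF F m b z * ginv b j' z) :=
          Finset.sum_congr rfl fun a _ => Finset.sum_comm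
      _ = ∑ a, ∑ m, ginv i a z * Nc Γ m a z * (if m = j' then (1:ℝ) else 0) := by
          refine Finset.sum_congr rfl fun a _ => Finset.sum_congr rfl fun m _ => ?_
          rw [← Finset.mul_sum, hgV m j']
      _ = ∑ a, ginv i a z * Nc Γ j' a z :=
          Finset.sum_congr rfl fun a _ =>
            sum_delta₂' (fun m => ginv i a z * Nc Γ m a z) j'
  have ht2 : ∀ j', ∑ b, ∑ a, ginv i a z * (∑ m, gF F m a z * Nc Γ m b z) * ginv b j' z
      = ∑ b, Nc Γ i b z * ginv b j' z := by
    intro j'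
    calc ∑ b, ∑ a, ginv i a z * (∑ m, gF F m a z * Nc Γ m b z) * ginv b j' z
        = ∑ b, ∑ a, ∑ m, (ginv i a z * gF F a m z) * (Nc Γ m b z * ginv b j' z) := by
          refine Finset.sum_congr rfl fun b _ => Finset.sum_congr rfl fun a _ => ?_
          rw [Finset.mul_sum, Finset.sum_mul]
          refine Finset.sum_congr rfl fun m _ => ?_
          rw [hgf_symm z hz m a]; ring
      _ = ∑ b, ∑ m, ∑ a, (ginv i a z * gF F a m z) * (Nc Γ m b z * ginv b j' z) :=
          Finset.sum_congr rfl fun b _ => Finset.sum_comm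
      _ = ∑ b, ∑ m, (if i = m then (1:ℝ) else 0) * (Nc Γ m b z * ginv b j' z) := by
          refine Finset.sum_congr rfl fun b _ => Finset.sum_congr rfl fun m _ => ?_
          rw [← Finset.sum_mul, hgV' i m]
      _ = ∑ b, Nc Γ i b z * ginv b j' z :=
          Finset.sum_congr rfl fun b _ =>
            sum_delta₁ (fun m => Nc Γ m b z * ginv b j' z) i
  have ht3 : ∀ j', ∑ b, ∑ a, ginv i a z * (∑ m, 2 * CF F a m b z * (∑ k, z.2 k * Nc Γ m k z)) * ginv b j' z
      = ∑ m, (∑ k, z.2 k * Nc Γ m k z)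
          * (∑ b, ∑ a, ginv i a z * (2 * CF F a m b z) * ginv b j' z) := by
    intro j'
    calc ∑ b, ∑ a, ginv i a z * (∑ m, 2 * CF F a m b z * (∑ k, z.2 k * Nc Γ m k z)) * ginv b j' z
        = ∑ b, ∑ a, ∑ m, (∑ k, z.2 k * Nc Γ m k z)
            * (ginv i a z * (2 * CF F a m b z) * ginv b j' z) := by
          refine Finset.sum_congr rfl fun b _ => Finset.sum_congr rfl fun a _ => ?_
          rw [Finset.mul_sum, Finset.sum_mul]
          exact Finset.sum_congr rfl fun m _ => by ring
      _ = ∑ m, ∑ b, ∑ a, (∑ k, z.2 k * Nc Γ m k z)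
            * (ginv i a z * (2 * CF F a m b z) * ginv b j' z) := sum_rot3 _
      _ = ∑ m, (∑ k, z.2 k * Nc Γ m k z)
            * (∑ b, ∑ a, ginv i a z * (2 * CF F a m b z) * ginv b j' z) := by
          refine Finset.sum_congr rfl fun m _ => ?_
          rw [Finset.mul_sum]
          exact Finset.sum_congr rfl fun b _ => (Finset.mul_sum _ _ _).symm
  have hA1c : ∀ j', ∑ k, z.2 k * pdx k (ginv i j') z
      = -(∑ a, ginv i a z * Nc Γ j' a z)
        - (∑ b, Nc Γ i b z * ginv b j' z)
        - (∑ m, (∑ k, z.2 k * Nc Γ m k z)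
            * (∑ b, ∑ a, ginv i a z * (2 * CF F a m b z) * ginv b j' z)) := by
    intro j'
    calc ∑ k, z.2 k * pdx k (ginv i j') z
        = ∑ k, z.2 k * (-∑ bb, ∑ aa, ginv i aa z * pdx k (gF F aa bb) z * ginv bb j' z) :=
          Finset.sum_congr rfl fun k _ => by rw [hDGiX k i j']
      _ = -∑ k, z.2 k * (∑ bb, ∑ aa, ginv i aa z * pdx k (gF F aa bb) z * ginv bb j' z) := by
          rw [← Finset.sum_neg_distrib]
          exact Finset.sum_congr rfl fun k _ => by ring
      _ = -∑ bb, ∑ aa, ginv i aa z * (∑ k, z.2 k * pdx k (gF F aa bb) z) * ginv bb j' z := by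
          rw [sum_swap₂]
      _ = -∑ bb, ∑ aa, ginv i aa z * (∑ m, (gF F m bb z * Nc Γ m aa z
            + gF F m aa z * Nc Γ m bb z
            + 2 * CF F aa m bb z * (∑ k, z.2 k * Nc Γ m k z))) * ginv bb j' z := by
          refine congrArg Neg.neg ?_
          refine Finset.sum_congr rfl fun bb _ => Finset.sum_congr rfl fun aa _ => ?_
          rw [hgfxc aa bb]
      _ = -((∑ b, ∑ a, ginv i a z * (∑ m, gF F m b z * Nc Γ m a z) * ginv b j' z)
            + (∑ b, ∑ a, ginv i a z * (∑ m, gF F m a z * Nc Γ m b z) * ginv b j' z)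
            + (∑ b, ∑ a, ginv i a z * (∑ m, 2 * CF F a m b z * (∑ k, z.2 k * Nc Γ m k z)) * ginv b j' z)) := by
          refine congrArg Neg.neg ?_
          calc ∑ bb, ∑ aa, ginv i aa z * (∑ m, (gF F m bb z * Nc Γ m aa z
                + gF F m aa z * Nc Γ m bb z
                + 2 * CF F aa m bb z * (∑ k, z.2 k * Nc Γ m k z))) * ginv bb j' z
              = ∑ bb, ∑ aa, (ginv i aa z * (∑ m, gF F m bb z * Nc Γ m aa z) * ginv bb j' z
                + ginv i aa z * (∑ m, gF F m aa z * Nc Γ m bb z) * ginv bb j' z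
                + ginv i aa z * (∑ m, 2 * CF F aa m bb z * (∑ k, z.2 k * Nc Γ m k z)) * ginv bb j' z) := by
                refine Finset.sum_congr rfl fun bb _ => Finset.sum_congr rfl fun aa _ => ?_
                rw [sum_split3]; ring
            _ = _ := by
                rw [← sum_split3]
                refine Finset.sum_congr rfl fun bb _ => ?_
                rw [sum_split3]
      _ = _ := by rw [ht1 j', ht2 j', ht3 j']; ring
  -- assemble the LHS
  have hLx : ∑ k, z.2 k * pdx k (nablaV ginv u i) z
      = (∑ j, (∑ k, z.2 k * pdx k (ginv i j) z) * pdy j u z)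
        + (∑ j, ginv i j z * (∑ k, z.2 k * pdx k (pdy j u) z)) := by
    calc ∑ k, z.2 k * pdx k (nablaV ginv u i) z
        = ∑ k, z.2 k * ∑ j, (pdx k (ginv i j) z * pdy j u z + ginv i j z * pdx k (pdy j u) z) :=
          Finset.sum_congr rfl fun k _ => by rw [hVx k i]
      _ = ∑ j, ∑ k, z.2 k * (pdx k (ginv i j) z * pdy j u z + ginv i j z * pdx k (pdy j u) z) :=
          sum_swap₀ _ _
      _ = ∑ j, ((∑ k, z.2 k * pdx k (ginv i j) z) * pdy j u z
            + ginv i j z * (∑ k, z.2 k * pdx k (pdy j u) z)) := by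
          refine Finset.sum_congr rfl fun j _ => ?_
          rw [Finset.sum_mul, Finset.mul_sum, ← Finset.sum_add_distrib]
          exact Finset.sum_congr rfl fun k _ => by ring
      _ = _ := Finset.sum_add_distrib
  have hA1sum : ∑ j, (∑ k, z.2 k * pdx k (ginv i j) z) * pdy j u z
      = -(∑ j, (∑ a, ginv i a z * Nc Γ j a z) * pdy j u z)
        - (∑ j, (∑ b, Nc Γ i b z * ginv b j z) * pdy j u z)
        - (∑ j, (∑ m, (∑ k, z.2 k * Nc Γ m k z)
            * (∑ b, ∑ a, ginv i a z * (2 * CF F a m b z) * ginv b j z)) * pdy j u z) := by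
    calc ∑ j, (∑ k, z.2 k * pdx k (ginv i j) z) * pdy j u z
        = ∑ j, (-((∑ a, ginv i a z * Nc Γ j a z) * pdy j u z)
            - (∑ b, Nc Γ i b z * ginv b j z) * pdy j u z
            - (∑ m, (∑ k, z.2 k * Nc Γ m k z)
                * (∑ b, ∑ a, ginv i a z * (2 * CF F a m b z) * ginv b j z)) * pdy j u z) := by
          refine Finset.sum_congr rfl fun j _ => ?_
          rw [hA1c j]; ring
      _ = _ := by rw [sum_split3neg]
  have hS2 : ∑ j, (∑ b, Nc Γ i b z * ginv b j z) * pdy j u z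
      = ∑ p, Nc Γ i p z * nablaV ginv u p z := by
    calc ∑ j, (∑ b, Nc Γ i b z * ginv b j z) * pdy j u z
        = ∑ j, ∑ b, Nc Γ i b z * (ginv b j z * pdy j u z) := by
          refine Finset.sum_congr rfl fun j _ => ?_
          rw [Finset.sum_mul]
          exact Finset.sum_congr rfl fun b _ => by ring
      _ = ∑ b, ∑ j, Nc Γ i b z * (ginv b j z * pdy j u z) := Finset.sum_comm
      _ = ∑ b, Nc Γ i b z * ∑ j, ginv b j z * pdy j u z :=
          Finset.sum_congr rfl fun b _ => (Finset.mul_sum _ _ _).symm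
      _ = ∑ p, Nc Γ i p z * nablaV ginv u p z := rfl
  have hLN : ∑ p, (∑ k, z.2 k * Nc Γ p k z) * pdy p (nablaV ginv u i) z
      = (∑ p, ∑ j, (∑ k, z.2 k * Nc Γ p k z) * (pdy p (ginv i j) z * pdy j u z))
        + (∑ p, ∑ j, (∑ k, z.2 k * Nc Γ p k z) * (ginv i j z * pdy p (pdy j u) z)) := by
    calc ∑ p, (∑ k, z.2 k * Nc Γ p k z) * pdy p (nablaV ginv u i) z
        = ∑ p, (∑ k, z.2 k * Nc Γ p k z) * ∑ j, (pdy p (ginv i j) z * pdy j u z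
            + ginv i j z * pdy p (pdy j u) z) :=
          Finset.sum_congr rfl fun p _ => by rw [hVy p i]
      _ = ∑ p, ((∑ j, (∑ k, z.2 k * Nc Γ p k z) * (pdy p (ginv i j) z * pdy j u z))
            + ∑ j, (∑ k, z.2 k * Nc Γ p k z) * (ginv i j z * pdy p (pdy j u) z)) := by
          refine Finset.sum_congr rfl fun p _ => ?_
          rw [Finset.mul_sum, ← Finset.sum_add_distrib]
          exact Finset.sum_congr rfl fun j _ => by ring
      _ = _ := Finset.sum_add_distrib
  have hDGiY2 : ∀ p j', pdy p (ginv i j') z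
      = -∑ b, ∑ a, ginv i a z * (2 * CF F a p b z) * ginv b j' z := by
    intro p j'
    rw [hDGiY p i j']
    refine congrArg Neg.neg (Finset.sum_congr rfl fun b _ => Finset.sum_congr rfl fun a _ => ?_)
    rw [hgfyC p a b]
  have hLN1 : ∑ p, ∑ j, (∑ k, z.2 k * Nc Γ p k z) * (pdy p (ginv i j) z * pdy j u z)
      = -(∑ j, (∑ m, (∑ k, z.2 k * Nc Γ m k z)
          * (∑ b, ∑ a, ginv i a z * (2 * CF F a m b z) * ginv b j z)) * pdy j u z) := by
    calc ∑ p, ∑ j, (∑ k, z.2 k * Nc Γ p k z) * (pdy p (ginv i j) z * pdy j u z)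
        = ∑ p, ∑ j, -((∑ k, z.2 k * Nc Γ p k z)
            * (∑ b, ∑ a, ginv i a z * (2 * CF F a p b z) * ginv b j z) * pdy j u z) := by
          refine Finset.sum_congr rfl fun p _ => Finset.sum_congr rfl fun j _ => ?_
          rw [hDGiY2 p j]; ring
      _ = -∑ p, ∑ j, (∑ k, z.2 k * Nc Γ p k z)
            * (∑ b, ∑ a, ginv i a z * (2 * CF F a p b z) * ginv b j z) * pdy j u z := by
          rw [← Finset.sum_neg_distrib]
          exact Finset.sum_congr rfl fun p _ => Finset.sum_neg_distrib _
      _ = -∑ j, ∑ p, (∑ k, z.2 k * Nc Γ p k z)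
            * (∑ b, ∑ a, ginv i a z * (2 * CF F a p b z) * ginv b j z) * pdy j u z :=
          congrArg Neg.neg Finset.sum_comm
      _ = _ := by
          refine congrArg Neg.neg (Finset.sum_congr rfl fun j _ => ?_)
          rw [Finset.sum_mul]
  have hLY : F z * ∑ p, Yy Ω ginv p z * pdy p (nablaV ginv u i) z
      = F z * (∑ p, ∑ j, Yy Ω ginv p z * (pdy p (ginv i j) z * pdy j u z))
        + F z * (∑ p, ∑ j, Yy Ω ginv p z * (ginv i j z * pdy p (pdy j u) z)) := by
    have e : ∑ p, Yy Ω ginv p z * pdy p (nablaV ginv u i) z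
        = (∑ p, ∑ j, Yy Ω ginv p z * (pdy p (ginv i j) z * pdy j u z))
          + (∑ p, ∑ j, Yy Ω ginv p z * (ginv i j z * pdy p (pdy j u) z)) := by
      calc ∑ p, Yy Ω ginv p z * pdy p (nablaV ginv u i) z
          = ∑ p, Yy Ω ginv p z * ∑ j, (pdy p (ginv i j) z * pdy j u z
              + ginv i j z * pdy p (pdy j u) z) :=
            Finset.sum_congr rfl fun p _ => by rw [hVy p i]
        _ = ∑ p, ((∑ j, Yy Ω ginv p z * (pdy p (ginv i j) z * pdy j u z))
              + ∑ j, Yy Ω ginv p z * (ginv i j z * pdy p (pdy j u) z)) := by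
            refine Finset.sum_congr rfl fun p _ => ?_
            rw [Finset.mul_sum, ← Finset.sum_add_distrib]
            exact Finset.sum_congr rfl fun j _ => by ring
        _ = _ := Finset.sum_add_distrib
    rw [e]; ring
  have hLHS : XVec F Γ Ω ginv (nablaV ginv u) i z
      = (∑ j, ginv i j z * (∑ k, z.2 k * pdx k (pdy j u) z))
        - (∑ j, (∑ a, ginv i a z * Nc Γ j a z) * pdy j u z)
        - (∑ p, ∑ j, (∑ k, z.2 k * Nc Γ p k z) * (ginv i j z * pdy p (pdy j u) z))
        + F z * (∑ p, ∑ j, Yy Ω ginv p z * (pdy p (ginv i j) z * pdy j u z))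
        + F z * (∑ p, ∑ j, Yy Ω ginv p z * (ginv i j z * pdy p (pdy j u) z)) := by
    rw [hL0, hLx, hA1sum, hLN, hLN1, hLY, ← hS2]
    ring
  -- RHS: fibre derivative of Xu
  have hXsy : ∀ j, pdy j (Xs F Γ Ω ginv u) z
      = dmS F Γ Ω ginv j u z + ∑ k, z.2 k * pdy j (dmS F Γ Ω ginv k u) z := by
    intro j
    show pdy j (fun ζ => ∑ k, ζ.2 k * dmS F Γ Ω ginv k u ζ) z = _
    rw [pdy_sum j _ _ (fun k _ => (dA (Sm.coordY k)).fun_mul (dA (hdmSS k)))]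
    rw [Finset.sum_congr rfl (fun k _ => pdy_mul j (dA (Sm.coordY k)) (dA (hdmSS k)))]
    calc ∑ k, (pdy j (fun ζ : Pt n => ζ.2 k) z * dmS F Γ Ω ginv k u z
          + z.2 k * pdy j (dmS F Γ Ω ginv k u) z)
        = ∑ k, ((if k = j then (1:ℝ) else 0) * dmS F Γ Ω ginv k u z
            + z.2 k * pdy j (dmS F Γ Ω ginv k u) z) := by
          exact Finset.sum_congr rfl fun k _ => by rw [pdy_coord]
      _ = (∑ k, (if k = j then (1:ℝ) else 0) * dmS F Γ Ω ginv k u z)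
            + ∑ k, z.2 k * pdy j (dmS F Γ Ω ginv k u) z := Finset.sum_add_distrib
      _ = _ := by rw [sum_delta₁']
  have hdmSy : ∀ j k, pdy j (dmS F Γ Ω ginv k u) z
      = pdy j (pdx k u) z
        - (∑ p, (pdy j (Nc Γ p k) z * pdy p u z + Nc Γ p k z * pdy j (pdy p u) z))
        + (pdy j F z * (∑ l, Yl Ω ginv l k z * pdy l u z)
          + F z * ∑ l, (pdy j (Yl Ω ginv l k) z * pdy l u z
              + Yl Ω ginv l k z * pdy j (pdy l u) z)) := by
    intro j k
    have d1 : DifferentiableAt ℝ (fun ζ => pdx k u ζ - ∑ p, Nc Γ p k ζ * pdy p u ζ) z :=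
      (dA (hpdxuS k)).sub (dA (Sm.sum _ _ fun p _ => Sm.mul (hNS p k) (hpdyuS p)))
    have d2 : DifferentiableAt ℝ (fun ζ => F ζ * ∑ l, Yl Ω ginv l k ζ * pdy l u ζ) z :=
      (dA hFS).mul (dA (Sm.sum _ _ fun l _ => Sm.mul (hYlS l k) (hpdyuS l)))
    show pdy j (fun ζ => (pdx k u ζ - ∑ p, Nc Γ p k ζ * pdy p u ζ)
        + F ζ * ∑ l, Yl Ω ginv l k ζ * pdy l u ζ) z = _
    rw [pdy_add j d1 d2]
    congr 1
    · rw [pdy_sub j (dA (hpdxuS k)) (dA (Sm.sum _ _ fun p _ => Sm.mul (hNS p k) (hpdyuS p)))]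
      congr 1
      rw [pdy_sum j _ _ (fun p _ => (dA (hNS p k)).fun_mul (dA (hpdyuS p)))]
      exact Finset.sum_congr rfl fun p _ => pdy_mul j (dA (hNS p k)) (dA (hpdyuS p))
    · rw [pdy_mul j (dA hFS) (dA (Sm.sum _ _ fun l _ => Sm.mul (hYlS l k) (hpdyuS l)))]
      congr 1
      rw [pdy_sum j _ _ (fun l _ => (dA (hYlS l k)).fun_mul (dA (hpdyuS l)))]
      congr 1
      exact Finset.sum_congr rfl fun l _ => pdy_mul j (dA (hYlS l k)) (dA (hpdyuS l))
  -- the contracted pieces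
  have hc2 : ∀ j, ∑ k, z.2 k * (∑ p, (pdy j (Nc Γ p k) z * pdy p u z
        + Nc Γ p k z * pdy j (pdy p u) z))
      = (∑ p, Nc Γ p j z * pdy p u z)
        + (∑ p, (∑ k, z.2 k * Nc Γ p k z) * pdy j (pdy p u) z) := by
    intro j
    calc ∑ k, z.2 k * (∑ p, (pdy j (Nc Γ p k) z * pdy p u z + Nc Γ p k z * pdy j (pdy p u) z))
        = ∑ p, ∑ k, z.2 k * (pdy j (Nc Γ p k) z * pdy p u z
            + Nc Γ p k z * pdy j (pdy p u) z) := sum_swap₀ _ _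
      _ = ∑ p, ((∑ k, z.2 k * pdy j (Nc Γ p k) z) * pdy p u z
            + (∑ k, z.2 k * Nc Γ p k z) * pdy j (pdy p u) z) := by
          refine Finset.sum_congr rfl fun p _ => ?_
          rw [Finset.sum_mul, Finset.sum_mul, ← Finset.sum_add_distrib]
          exact Finset.sum_congr rfl fun k _ => by ring
      _ = ∑ p, (Nc Γ p j z * pdy p u z
            + (∑ k, z.2 k * Nc Γ p k z) * pdy j (pdy p u) z) := by
          refine Finset.sum_congr rfl fun p _ => ?_
          rw [hNyc j p]
      _ = _ := Finset.sum_add_distrib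
  have hc3a : ∀ j, ∑ k, z.2 k * (pdy j F z * (∑ l, Yl Ω ginv l k z * pdy l u z))
      = pdy j F z * (∑ l, Yy Ω ginv l z * pdy l u z) := by
    intro j
    calc ∑ k, z.2 k * (pdy j F z * (∑ l, Yl Ω ginv l k z * pdy l u z))
        = pdy j F z * ∑ k, z.2 k * ∑ l, Yl Ω ginv l k z * pdy l u z := by
          rw [Finset.mul_sum]
          exact Finset.sum_congr rfl fun k _ => by ring
      _ = pdy j F z * ∑ l, (∑ k, z.2 k * Yl Ω ginv l k z) * pdy l u z := by rw [sum_swap₁]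
      _ = pdy j F z * (∑ l, Yy Ω ginv l z * pdy l u z) := by
          congr 1
          refine Finset.sum_congr rfl fun l _ => ?_
          congr 1
          show _ = ∑ k, Yl Ω ginv l k z * z.2 k
          exact Finset.sum_congr rfl fun k _ => by ring
  have hYX : ∀ j l, ∑ k, z.2 k * pdy j (Yl Ω ginv l k) z
      = -∑ b, ∑ a, ginv l a z * pdy j (gF F a b) z * Yy Ω ginv b z := by
    intro j l
    calc ∑ k, z.2 k * pdy j (Yl Ω ginv l k) z
        = ∑ k, z.2 k * ∑ m, Ω k m z.1 * pdy j (ginv l m) z :=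
          Finset.sum_congr rfl fun k _ => by rw [hYly j l k]
      _ = ∑ m, (∑ k, z.2 k * Ω k m z.1) * pdy j (ginv l m) z :=
          sum_swap₁ (fun k => z.2 k) (fun m => pdy j (ginv l m) z) (fun m k => Ω k m z.1)
      _ = ∑ m, (∑ k, z.2 k * Ω k m z.1)
            * (-∑ b, ∑ a, ginv l a z * pdy j (gF F a b) z * ginv b m z) := by
          refine Finset.sum_congr rfl fun m _ => ?_
          rw [hDGiY j l m]
      _ = -∑ m, (∑ k, z.2 k * Ω k m z.1)
            * (∑ b, ∑ a, ginv l a z * pdy j (gF F a b) z * ginv b m z) := by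
          rw [← Finset.sum_neg_distrib]
          exact Finset.sum_congr rfl fun m _ => by ring
      _ = -∑ b, ∑ a, ginv l a z * pdy j (gF F a b) z
            * (∑ m, (∑ k, z.2 k * Ω k m z.1) * ginv b m z) := by
          rw [sum_swap₅ (fun m => ∑ k, z.2 k * Ω k m z.1) (fun a => ginv l a z)
            (fun a b => pdy j (gF F a b) z) (fun b m => ginv b m z)]
      _ = -∑ b, ∑ a, ginv l a z * pdy j (gF F a b) z * Yy Ω ginv b z := by
          refine congrArg Neg.neg (Finset.sum_congr rfl fun b _ =>
            Finset.sum_congr rfl fun a _ => ?_)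
          congr 1
          calc ∑ m, (∑ k, z.2 k * Ω k m z.1) * ginv b m z
              = ∑ k, z.2 k * ∑ m, Ω k m z.1 * ginv b m z :=
                (sum_swap₁ (fun k => z.2 k) (fun m => ginv b m z) (fun m k => Ω k m z.1)).symm
            _ = ∑ k, Yl Ω ginv b k z * z.2 k := Finset.sum_congr rfl fun k _ => by
                rw [show Yl Ω ginv b k z = ∑ m, Ω k m z.1 * ginv b m z from rfl]; ring
            _ = Yy Ω ginv b z := rfl
  have hc3b : ∀ j, ∑ k, z.2 k * (F z * ∑ l, (pdy j (Yl Ω ginv l k) z * pdy l u z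
        + Yl Ω ginv l k z * pdy j (pdy l u) z))
      = -(F z * (∑ l, (∑ b, ∑ a, ginv l a z * pdy j (gF F a b) z * Yy Ω ginv b z)
            * pdy l u z))
        + F z * (∑ l, Yy Ω ginv l z * pdy j (pdy l u) z) := by
    intro j
    calc ∑ k, z.2 k * (F z * ∑ l, (pdy j (Yl Ω ginv l k) z * pdy l u z
          + Yl Ω ginv l k z * pdy j (pdy l u) z))
        = F z * ∑ k, z.2 k * ∑ l, (pdy j (Yl Ω ginv l k) z * pdy l u z
            + Yl Ω ginv l k z * pdy j (pdy l u) z) := by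
          rw [Finset.mul_sum]
          exact Finset.sum_congr rfl fun k _ => by ring
      _ = F z * ∑ l, ∑ k, z.2 k * (pdy j (Yl Ω ginv l k) z * pdy l u z
            + Yl Ω ginv l k z * pdy j (pdy l u) z) := by rw [sum_swap₀]
      _ = F z * ∑ l, ((∑ k, z.2 k * pdy j (Yl Ω ginv l k) z) * pdy l u z
            + (∑ k, z.2 k * Yl Ω ginv l k z) * pdy j (pdy l u) z) := by
          congr 1
          refine Finset.sum_congr rfl fun l _ => ?_
          rw [Finset.sum_mul, Finset.sum_mul, ← Finset.sum_add_distrib]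
          exact Finset.sum_congr rfl fun k _ => by ring
      _ = F z * ∑ l, (-((∑ b, ∑ a, ginv l a z * pdy j (gF F a b) z * Yy Ω ginv b z)
              * pdy l u z)
            + Yy Ω ginv l z * pdy j (pdy l u) z) := by
          congr 1
          refine Finset.sum_congr rfl fun l _ => ?_
          rw [hYX j l]
          have : ∑ k, z.2 k * Yl Ω ginv l k z = Yy Ω ginv l z := by
            show _ = ∑ k, Yl Ω ginv l k z * z.2 k
            exact Finset.sum_congr rfl fun k _ => by ring
          rw [this]
          ring
      _ = _ := by
          rw [Finset.sum_add_distrib, Finset.sum_neg_distrib]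
          ring
  have hXsyc : ∀ j, pdy j (Xs F Γ Ω ginv u) z
      = dmS F Γ Ω ginv j u z
        + (∑ k, z.2 k * pdy j (pdx k u) z)
        - (∑ p, Nc Γ p j z * pdy p u z)
        - (∑ p, (∑ k, z.2 k * Nc Γ p k z) * pdy j (pdy p u) z)
        + pdy j F z * (∑ l, Yy Ω ginv l z * pdy l u z)
        - F z * (∑ l, (∑ b, ∑ a, ginv l a z * pdy j (gF F a b) z * Yy Ω ginv b z)
            * pdy l u z)
        + F z * (∑ l, Yy Ω ginv l z * pdy j (pdy l u) z) := by
    intro j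
    rw [hXsy j]
    have e0 : ∀ k, z.2 k * pdy j (dmS F Γ Ω ginv k u) z
        = z.2 k * pdy j (pdx k u) z
          - z.2 k * (∑ p, (pdy j (Nc Γ p k) z * pdy p u z + Nc Γ p k z * pdy j (pdy p u) z))
          + z.2 k * (pdy j F z * (∑ l, Yl Ω ginv l k z * pdy l u z))
          + z.2 k * (F z * ∑ l, (pdy j (Yl Ω ginv l k) z * pdy l u z
              + Yl Ω ginv l k z * pdy j (pdy l u) z)) := fun k => by rw [hdmSy j k]; ring
    rw [Finset.sum_congr rfl (fun k _ => e0 k), sum_split4, hc2 j, hc3a j, hc3b j]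
    ring
  -- assemble RHS
  have hR1 : nablaV ginv (Xs F Γ Ω ginv u) i z
      = (∑ j, ginv i j z * dmS F Γ Ω ginv j u z)
        + (∑ j, ginv i j z * (∑ k, z.2 k * pdy j (pdx k u) z))
        - (∑ j, ginv i j z * (∑ p, Nc Γ p j z * pdy p u z))
        - (∑ j, ginv i j z * (∑ p, (∑ k, z.2 k * Nc Γ p k z) * pdy j (pdy p u) z))
        + (∑ j, ginv i j z * (pdy j F z * (∑ l, Yy Ω ginv l z * pdy l u z)))
        - (∑ j, ginv i j z * (F z * (∑ l, (∑ b, ∑ a, ginv l a z * pdy j (gF F a b) z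
            * Yy Ω ginv b z) * pdy l u z)))
        + (∑ j, ginv i j z * (F z * (∑ l, Yy Ω ginv l z * pdy j (pdy l u) z))) := by
    calc nablaV ginv (Xs F Γ Ω ginv u) i z
        = ∑ j, ginv i j z * (dmS F Γ Ω ginv j u z
            + (∑ k, z.2 k * pdy j (pdx k u) z)
            - (∑ p, Nc Γ p j z * pdy p u z)
            - (∑ p, (∑ k, z.2 k * Nc Γ p k z) * pdy j (pdy p u) z)
            + pdy j F z * (∑ l, Yy Ω ginv l z * pdy l u z)
            - F z * (∑ l, (∑ b, ∑ a, ginv l a z * pdy j (gF F a b) z * Yy Ω ginv b z)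
                * pdy l u z)
            + F z * (∑ l, Yy Ω ginv l z * pdy j (pdy l u) z)) := by
          show ∑ j, ginv i j z * pdy j (Xs F Γ Ω ginv u) z = _
          exact Finset.sum_congr rfl fun j _ => by rw [hXsyc j]
      _ = _ := by rw [sum_split7']
  have hB5 : ∑ j, ginv i j z * (pdy j F z * (∑ l, Yy Ω ginv l z * pdy l u z))
      = (∑ l, Yy Ω ginv l z * pdy l u z) * z.2 i := by
    calc ∑ j, ginv i j z * (pdy j F z * (∑ l, Yy Ω ginv l z * pdy l u z))
        = (∑ j, ginv i j z * pdy j F z) * (∑ l, Yy Ω ginv l z * pdy l u z) := by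
          rw [Finset.sum_mul]
          exact Finset.sum_congr rfl fun j _ => by ring
      _ = z.2 i * (∑ l, Yy Ω ginv l z * pdy l u z) := by rw [hgiF i]
      _ = _ := by ring
  have hR3 : iprod F (Yy Ω ginv) (nablaV ginv u) z = ∑ l, Yy Ω ginv l z * pdy l u z := by
    show ∑ a, ∑ b, gF F a b z * Yy Ω ginv a z * nablaV ginv u b z = _
    calc ∑ a, ∑ b, gF F a b z * Yy Ω ginv a z * nablaV ginv u b z
        = ∑ a, Yy Ω ginv a z * (∑ b, gF F a b z * nablaV ginv u b z) := by
          refine Finset.sum_congr rfl fun a _ => ?_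
          rw [Finset.mul_sum]
          exact Finset.sum_congr rfl fun b _ => by ring
      _ = ∑ l, Yy Ω ginv l z * pdy l u z := by
          refine Finset.sum_congr rfl fun a _ => ?_
          congr 1
          calc ∑ b, gF F a b z * nablaV ginv u b z
              = ∑ b, ∑ l, gF F a b z * (ginv b l z * pdy l u z) := by
                refine Finset.sum_congr rfl fun b _ => ?_
                rw [show nablaV ginv u b z = ∑ l, ginv b l z * pdy l u z from rfl,
                  Finset.mul_sum]
            _ = ∑ l, ∑ b, gF F a b z * (ginv b l z * pdy l u z) := Finset.sum_comm
            _ = ∑ l, (if a = l then (1:ℝ) else 0) * pdy l u z := by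
                refine Finset.sum_congr rfl fun l _ => ?_
                rw [← hgV a l, Finset.sum_mul]
                exact Finset.sum_congr rfl fun b _ => by ring
            _ = pdy a u z := sum_delta₁ _ a
  -- the Cartan-symmetry cancellation
  have hTcyc : ∀ x y w, pdy x (pdy y (pdy w (fun w' => F w' ^ 2))) z
      = pdy w (pdy x (pdy y (fun w' => F w' ^ 2))) z :=
    fun x y w => (hT_inner x y w).trans (hT_outer x w y)
  have e5L : ∑ p, ∑ l, Yy Ω ginv p z * (pdy p (ginv i l) z * pdy l u z)
      = -∑ p, ∑ l, ∑ b, ∑ a, (1/2 : ℝ)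
          * (pdy p (pdy a (pdy b (fun w => F w ^ 2))) z
            * (Yy Ω ginv p z * (ginv i a z * (ginv l b z * pdy l u z)))) := by
    calc ∑ p, ∑ l, Yy Ω ginv p z * (pdy p (ginv i l) z * pdy l u z)
        = ∑ p, ∑ l, -(∑ b, ∑ a, (1/2 : ℝ)
            * (pdy p (pdy a (pdy b (fun w => F w ^ 2))) z
              * (Yy Ω ginv p z * (ginv i a z * (ginv l b z * pdy l u z))))) := by
          refine Finset.sum_congr rfl fun p _ => Finset.sum_congr rfl fun l _ => ?_
          rw [hDGiY p i l]
          rw [show Yy Ω ginv p z * ((-∑ b, ∑ a, ginv i a z * pdy p (gF F a b) z * ginv b l z)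
                * pdy l u z)
              = -(Yy Ω ginv p z * ((∑ b, ∑ a, ginv i a z * pdy p (gF F a b) z * ginv b l z)
                * pdy l u z)) from by ring]
          rw [mul_sum₂ (Yy Ω ginv p z) (pdy l u z)
            (fun b a => ginv i a z * pdy p (gF F a b) z * ginv b l z)]
          refine congrArg Neg.neg (Finset.sum_congr rfl fun b _ =>
            Finset.sum_congr rfl fun a _ => ?_)
          rw [hDgY p a b, hgisym b l]
          ring
      _ = _ := by
          rw [← Finset.sum_neg_distrib]
          exact Finset.sum_congr rfl fun p _ => Finset.sum_neg_distrib _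
  have e5R : ∑ j, ginv i j z * (F z * (∑ l, (∑ b, ∑ a, ginv l a z * pdy j (gF F a b) z
        * Yy Ω ginv b z) * pdy l u z))
      = F z * ∑ p, ∑ l, ∑ b, ∑ a, (1/2 : ℝ)
          * (pdy p (pdy a (pdy b (fun w => F w ^ 2))) z
            * (Yy Ω ginv p z * (ginv i a z * (ginv l b z * pdy l u z)))) := by
    calc ∑ j, ginv i j z * (F z * (∑ l, (∑ b, ∑ a, ginv l a z * pdy j (gF F a b) z
          * Yy Ω ginv b z) * pdy l u z))
        = F z * ∑ j, ginv i j z * (∑ l, (∑ b, ∑ a, ginv l a z * pdy j (gF F a b) z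
            * Yy Ω ginv b z) * pdy l u z) := by
          rw [Finset.mul_sum]
          exact Finset.sum_congr rfl fun j _ => by ring
      _ = F z * ∑ j, ∑ l, ∑ b, ∑ a, ginv i j z * (ginv l a z * pdy j (gF F a b) z
            * (Yy Ω ginv b z * pdy l u z)) := by
          congr 1
          refine Finset.sum_congr rfl fun j _ => ?_
          rw [Finset.mul_sum]
          refine Finset.sum_congr rfl fun l _ => ?_
          rw [mul_sum₂ (ginv i j z) (pdy l u z)
            (fun b a => ginv l a z * pdy j (gF F a b) z * Yy Ω ginv b z)]
          exact Finset.sum_congr rfl fun b _ => Finset.sum_congr rfl fun a _ => by ring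
      _ = F z * ∑ j, ∑ b, ∑ l, ∑ a, ginv i j z * (ginv l a z * pdy j (gF F a b) z
            * (Yy Ω ginv b z * pdy l u z)) := by
          congr 1
          exact Finset.sum_congr rfl fun j _ => Finset.sum_comm
      _ = F z * ∑ b, ∑ j, ∑ l, ∑ a, ginv i j z * (ginv l a z * pdy j (gF F a b) z
            * (Yy Ω ginv b z * pdy l u z)) := by
          congr 1
          exact Finset.sum_comm
      _ = F z * ∑ b, ∑ l, ∑ a, ∑ j, ginv i j z * (ginv l a z * pdy j (gF F a b) z
            * (Yy Ω ginv b z * pdy l u z)) := by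
          congr 1
          exact Finset.sum_congr rfl fun b _ => (sum_rot3 _).symm
      _ = _ := by
          congr 1
          refine Finset.sum_congr rfl fun b _ => Finset.sum_congr rfl fun l _ =>
            Finset.sum_congr rfl fun a _ => Finset.sum_congr rfl fun j _ => ?_
          rw [hDgY j a b, hTcyc j a b]
          ring
  have E1 : ∑ j, ginv i j z * (∑ k, z.2 k * pdx k (pdy j u) z)
      = ∑ j, ginv i j z * (∑ k, z.2 k * pdy j (pdx k u) z) := by
    refine Finset.sum_congr rfl fun j _ => ?_
    congr 1
    exact Finset.sum_congr rfl fun k _ => by rw [huxy j k]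
  have E2 : ∑ j, (∑ a, ginv i a z * Nc Γ j a z) * pdy j u z
      = ∑ j, ginv i j z * (∑ p, Nc Γ p j z * pdy p u z) := by
    calc ∑ j, (∑ a, ginv i a z * Nc Γ j a z) * pdy j u z
        = ∑ j, ∑ a, ginv i a z * (Nc Γ j a z * pdy j u z) := by
          refine Finset.sum_congr rfl fun j _ => ?_
          rw [Finset.sum_mul]
          exact Finset.sum_congr rfl fun a _ => by ring
      _ = ∑ a, ∑ j, ginv i a z * (Nc Γ j a z * pdy j u z) := Finset.sum_comm
      _ = ∑ j, ginv i j z * (∑ p, Nc Γ p j z * pdy p u z) :=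
          Finset.sum_congr rfl fun a _ => (Finset.mul_sum _ _ _).symm
  have E3 : ∑ p, ∑ j, (∑ k, z.2 k * Nc Γ p k z) * (ginv i j z * pdy p (pdy j u) z)
      = ∑ j, ginv i j z * (∑ p, (∑ k, z.2 k * Nc Γ p k z) * pdy j (pdy p u) z) := by
    calc ∑ p, ∑ j, (∑ k, z.2 k * Nc Γ p k z) * (ginv i j z * pdy p (pdy j u) z)
        = ∑ j, ∑ p, (∑ k, z.2 k * Nc Γ p k z) * (ginv i j z * pdy p (pdy j u) z) :=
          Finset.sum_comm
      _ = ∑ j, ∑ p, ginv i j z * ((∑ k, z.2 k * Nc Γ p k z) * pdy j (pdy p u) z) := by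
          refine Finset.sum_congr rfl fun j _ => Finset.sum_congr rfl fun p _ => ?_
          rw [huyy p j]; ring
      _ = _ := Finset.sum_congr rfl fun j _ => (Finset.mul_sum _ _ _).symm
  have E4 : F z * (∑ p, ∑ j, Yy Ω ginv p z * (ginv i j z * pdy p (pdy j u) z))
      = ∑ j, ginv i j z * (F z * (∑ l, Yy Ω ginv l z * pdy j (pdy l u) z)) := by
    calc F z * (∑ p, ∑ j, Yy Ω ginv p z * (ginv i j z * pdy p (pdy j u) z))
        = ∑ p, ∑ j, F z * (Yy Ω ginv p z * (ginv i j z * pdy p (pdy j u) z)) := by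
          rw [Finset.mul_sum]
          exact Finset.sum_congr rfl fun p _ => Finset.mul_sum _ _ _
      _ = ∑ j, ∑ p, F z * (Yy Ω ginv p z * (ginv i j z * pdy p (pdy j u) z)) :=
          Finset.sum_comm
      _ = ∑ j, ginv i j z * (F z * (∑ l, Yy Ω ginv l z * pdy j (pdy l u) z)) := by
          refine Finset.sum_congr rfl fun j _ => ?_
          calc ∑ p, F z * (Yy Ω ginv p z * (ginv i j z * pdy p (pdy j u) z))
              = ∑ p, ginv i j z * (F z * (Yy Ω ginv p z * pdy j (pdy p u) z)) := by
                refine Finset.sum_congr rfl fun p _ => ?_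
                rw [huyy p j]; ring
            _ = ginv i j z * ∑ p, F z * (Yy Ω ginv p z * pdy j (pdy p u) z) :=
                (Finset.mul_sum _ _ _).symm
            _ = ginv i j z * (F z * (∑ l, Yy Ω ginv l z * pdy j (pdy l u) z)) := by
                congr 1
                exact (Finset.mul_sum _ _ _).symm
  have E5 : F z * (∑ p, ∑ j, Yy Ω ginv p z * (pdy p (ginv i j) z * pdy j u z))
      = -(∑ j, ginv i j z * (F z * (∑ l, (∑ b, ∑ a, ginv l a z * pdy j (gF F a b) z
          * Yy Ω ginv b z) * pdy l u z))) := by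
    rw [e5L, e5R]
    ring
  have hR2 : nablaM F Γ Ω ginv u i z = ∑ j, ginv i j z * dmS F Γ Ω ginv j u z := rfl
  rw [hLHS, hR1, hR2, hR3, hB5]
  linarith [E1, E2, E3, E4, E5]

/-- **Commutation formula for the generator and the vertical gradient:** for a
function `u` positively homogeneous of degree 0, on the set where `F = 1`,
`X(∇·u) = ∇·(Xu) − ∇:u − ⟨Y(y), ∇·u⟩ y`. -/
theorem stmt_12 (n : ℕ) (hn : 1 ≤ n) (W : Set (Pt n)) (hWopen : IsOpen W)
    (hWy : ∀ z ∈ W, z.2 ≠ 0)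
    (hWcone : ∀ z ∈ W, ∀ t : ℝ, 0 < t → (z.1, t • z.2) ∈ W)
    (F : Pt n → ℝ) (hFsmooth : ContDiffOn ℝ (⊤ : ℕ∞) F W)
    (hFpos : ∀ z ∈ W, 0 < F z)
    (hFhom : ∀ z ∈ W, ∀ t : ℝ, 0 < t → F (z.1, t • z.2) = t * F z)
    (ginv : Fin n → Fin n → Pt n → ℝ)
    (hginv : ∀ z ∈ W, ∀ i j, ∑ k, gF F i k z * ginv k j z = if i = j then (1:ℝ) else 0)
    (hginv' : ∀ z ∈ W, ∀ i j, ∑ k, ginv i k z * gF F k j z = if i = j then (1:ℝ) else 0)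
    (Γ : Fin n → Fin n → Fin n → Pt n → ℝ)
    (hΓsmooth : ∀ i j k, ContDiffOn ℝ (⊤ : ℕ∞) (Γ i j k) W)
    (hΓsym : ∀ i j k, ∀ z ∈ W, Γ i j k z = Γ i k j z)
    (hcompat : ∀ z ∈ W, ∀ j l m,
      pdx m (gF F j l) z =
        ∑ k, (gF F k l z * Γ k j m z + gF F k j z * Γ k l m z
          + 2 * CF F j k l z * Nc Γ k m z))
    (hspray : ∀ z ∈ W, ∀ i l, (∑ j, ∑ k, z.2 j * z.2 k * pdy l (Γ i j k) z) = 0)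
    (Ω : Fin n → Fin n → (Fin n → ℝ) → ℝ)
    (hΩsmooth : ∀ j k, ContDiffOn ℝ (⊤ : ℕ∞) (fun z : Pt n => Ω j k z.1) W)
    (hΩanti : ∀ z ∈ W, ∀ j k, Ω j k z.1 = -Ω k j z.1)
    (u : Pt n → ℝ) (hu : ContDiffOn ℝ (⊤ : ℕ∞) u W)
    (huhom : ∀ z ∈ W, ∀ t : ℝ, 0 < t → u (z.1, t • z.2) = u z) :
    ∀ z ∈ W, F z = 1 → ∀ i,
      XVec F Γ Ω ginv (nablaV ginv u) i z
        = nablaV ginv (Xs F Γ Ω ginv u) i z - nablaM F Γ Ω ginv u i z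
          - iprod F (Yy Ω ginv) (nablaV ginv u) z * z.2 i := by
  exact stmt_12_aux n hn W hWopen hWy hWcone F hFsmooth hFpos hFhom ginv hginv hginv' Γ hΓsmooth hΓsym hcompat hspray Ω hΩsmooth hΩanti u hu huhom

end
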